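/- arXiv:2107.06437 — 10 statements merged into one kernel-verified Lean document; each statement's English description precedes it below -/
import Mathlib

section
/- Let n ≥ 3 and let L be a Latin square of order n (a function L : Fin n × Fin n → Fin n such that each row and each column is a bijection). Then the inner distance of L is at most ⌊(n-1)/2⌋, where the inner distance is the minimum over all pairs of horizontally or vertically adjacent cells of the distance d(u,v) = min((u-v) mod n, (v-u) mod n) between their entries. -/
/-- Adjacent distance between two symbols modulo `n`. -/
def adist (n : ℕ) (u v : ZMod n) : ℕ := min (u - v).val (v - u).val

/-- Two cells of an `n × n` array are adjacent if they share an edge. -/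
def Adjacent {n : ℕ} (p q : Fin n × Fin n) : Prop :=
  (p.1 = q.1 ∧ (p.2.val + 1 = q.2.val ∨ q.2.val + 1 = p.2.val)) ∨
  (p.2 = q.2 ∧ (p.1.val + 1 = q.1.val ∨ q.1.val + 1 = p.1.val))

/-- A Latin square of order `n`: every row and column is a bijection. -/
def IsLatin (n : ℕ) (L : Fin n → Fin n → ZMod n) : Prop :=
  (∀ i, Function.Bijective fun j => L i j) ∧ (∀ j, Function.Bijective fun i => L i j)

/-- The inner distance of a square: the minimum adjacent distance over all
edge-adjacent pairs of cells. -/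
noncomputable def innerDist (n : ℕ) (L : Fin n → Fin n → ZMod n) : ℕ :=
  sInf {d | ∃ p q : Fin n × Fin n, Adjacent p q ∧ d = adist n (L p.1 p.2) (L q.1 q.2)}

lemma adist_key (n : ℕ) (hn : 3 ≤ n) (u v : ZMod n) (huv : u ≠ v)
    (h : (n - 1) / 2 < adist n u v) : (u - v).val * 2 = n := by
  haveI : NeZero n := ⟨by omega⟩
  have hne : u - v ≠ 0 := sub_ne_zero.mpr huv
  have hx : 0 < (u - v).val := by
    rcases Nat.eq_zero_or_pos (u - v).val with h0 | h0
    · exact absurd ((ZMod.val_eq_zero _).mp h0) hne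
    · exact h0
  have hlt : (u - v).val < n := ZMod.val_lt _
  have hneg : (v - u).val = n - (u - v).val := by
    rw [show v - u = -(u - v) by ring, ZMod.neg_val, if_neg hne]
  have hmin := h
  unfold adist at hmin
  rw [hneg] at hmin
  omega

theorem innerDist_le (n : ℕ) (hn : 3 ≤ n) (L : Fin n → Fin n → ZMod n)
    (hL : IsLatin n L) : innerDist n L ≤ (n - 1) / 2 := by
  haveI : NeZero n := ⟨by omega⟩
  set i0 : Fin n := ⟨0, by omega⟩
  set c0 : Fin n := ⟨0, by omega⟩
  set c1 : Fin n := ⟨1, by omega⟩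
  set c2 : Fin n := ⟨2, by omega⟩
  have hinj := (hL.1 i0).injective
  set a := L i0 c0 with ha
  set b := L i0 c1 with hb
  set c := L i0 c2 with hc
  have hab : a ≠ b := fun h => by simpa [i0, c0, c1, Fin.ext_iff] using hinj h
  have hbc : b ≠ c := fun h => by simpa [i0, c1, c2, Fin.ext_iff] using hinj h
  have hac : a ≠ c := fun h => by simpa [i0, c0, c2, Fin.ext_iff] using hinj h
  have adj1 : Adjacent ((i0, c0)) ((i0, c1)) := Or.inl ⟨rfl, Or.inl rfl⟩
  have adj2 : Adjacent ((i0, c1)) ((i0, c2)) := Or.inl ⟨rfl, Or.inl rfl⟩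
  have mem1 : adist n a b ∈ {d | ∃ p q : Fin n × Fin n, Adjacent p q ∧
      d = adist n (L p.1 p.2) (L q.1 q.2)} := ⟨(i0, c0), (i0, c1), adj1, rfl⟩
  have mem2 : adist n b c ∈ {d | ∃ p q : Fin n × Fin n, Adjacent p q ∧
      d = adist n (L p.1 p.2) (L q.1 q.2)} := ⟨(i0, c1), (i0, c2), adj2, rfl⟩
  by_cases h1 : adist n a b ≤ (n - 1) / 2
  · exact le_trans (Nat.sInf_le mem1) h1
  by_cases h2 : adist n b c ≤ (n - 1) / 2
  · exact le_trans (Nat.sInf_le mem2) h2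
  exfalso
  have k1 := adist_key n hn a b hab (lt_of_not_ge h1)
  have k2 := adist_key n hn b c hbc (lt_of_not_ge h2)
  have hvaleq : (a - b).val = (b - c).val := by omega
  have heq : a - b = b - c := ZMod.val_injective n hvaleq
  have hzero : (a - b) + (a - b) = 0 := by
    have : (((a - b).val + (a - b).val : ℕ) : ZMod n) = ((n : ℕ) : ZMod n) := by
      rw [show (a - b).val + (a - b).val = n by omega]
    rw [ZMod.natCast_self] at this
    rwa [Nat.cast_add, ZMod.natCast_val, ZMod.cast_id] at this
  apply hac
  have : a - c = 0 := by
    have : a - c = (a - b) + (b - c) := by ring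
    rw [this, ← heq, hzero]
  exact sub_eq_zero.mp this
end

section
/- For odd n ≥ 3, the map (i, j) ↦ (1 + (i-1)*(n-1)/2 + (j-1)*(n-1)/2) mod n defines a Latin square of order n whose inner distance equals (n-1)/2. -/
theorem odd_max_inner_distance (n : ℕ) (hn : 3 ≤ n) (hodd : Odd n) :
    IsLatin n (fun i j : Fin n =>
      1 + (i.val : ZMod n) * (((n - 1) / 2 : ℕ) : ZMod n)
        + (j.val : ZMod n) * (((n - 1) / 2 : ℕ) : ZMod n)) ∧
    innerDist n (fun i j : Fin n =>
      1 + (i.val : ZMod n) * (((n - 1) / 2 : ℕ) : ZMod n)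
        + (j.val : ZMod n) * (((n - 1) / 2 : ℕ) : ZMod n)) = (n - 1) / 2 := by

  obtain ⟨m, hm⟩ := hodd
  set k : ℕ := (n - 1) / 2 with hkdef
  have hnk : n = 2 * k + 1 := by omega
  have hk1 : 1 ≤ k := by omega
  have hkn : k < n := by omega
  haveI : NeZero n := ⟨by omega⟩
  set K : ZMod n := (k : ZMod n) with hKdef
  set L : Fin n → Fin n → ZMod n := fun i j : Fin n =>
      1 + (i.val : ZMod n) * K + (j.val : ZMod n) * K with hLdef
  have h2K : (2 : ZMod n) * K = -1 := by
    have h0 : ((2 * k + 1 : ℕ) : ZMod n) = 0 := by rw [← hnk]; exact ZMod.natCast_self n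
    push_cast at h0
    linear_combination h0
  have hKu : IsUnit K := IsUnit.of_mul_eq_one (a := K) (-2) (by linear_combination -h2K)
  have hcancel : ∀ a b : ZMod n, a * K = b * K → a = b := by
    intro a b h
    exact hKu.mul_left_cancel (by rw [mul_comm K a, mul_comm K b]; exact h)
  have hval : ∀ a b : Fin n, ((a.val : ZMod n) = (b.val : ZMod n)) → a = b := by
    intro a b h
    have := congrArg ZMod.val h
    rwa [ZMod.val_cast_of_lt a.isLt, ZMod.val_cast_of_lt b.isLt, ← Fin.ext_iff] at this
  have hcard : Fintype.card (ZMod n) = Fintype.card (Fin n) := by simp [ZMod.card]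
  have hKval : K.val = k := ZMod.val_cast_of_lt hkn
  have hnegK : (-K).val = k + 1 := by
    have h1 : ((n - k : ℕ) : ZMod n) = -K := by
      have h0 : ((n - k : ℕ) : ZMod n) + K = 0 := by
        rw [hKdef, ← Nat.cast_add]
        have : n - k + k = n := by omega
        rw [this]; exact ZMod.natCast_self n
      linear_combination h0
    rw [← h1, ZMod.val_cast_of_lt (by omega : n - k < n)]
    omega
  have hadist : ∀ u v : ZMod n, u - v = K → adist n u v = k := by
    intro u v h
    have h' : v - u = -K := by rw [← neg_sub, h]
    unfold adist
    rw [h, h', hKval, hnegK]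
    omega
  have hsymm : ∀ u v : ZMod n, adist n u v = adist n v u := by
    intro u v; unfold adist; exact Nat.min_comm _ _
  have keyj : ∀ (i j j' : Fin n), j.val + 1 = j'.val → L i j' - L i j = K := by
    intro i j j' h
    have hc : (j'.val : ZMod n) = (j.val : ZMod n) + 1 := by rw [← h]; push_cast; ring
    simp only [hLdef]
    linear_combination K * hc
  have keyi : ∀ (i i' j : Fin n), i.val + 1 = i'.val → L i' j - L i j = K := by
    intro i i' j h
    have hc : (i'.val : ZMod n) = (i.val : ZMod n) + 1 := by rw [← h]; push_cast; ring
    simp only [hLdef]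
    linear_combination K * hc
  have hadj : ∀ p q : Fin n × Fin n, Adjacent p q →
      adist n (L p.1 p.2) (L q.1 q.2) = k := by
    rintro p q (⟨h1, h2 | h2⟩ | ⟨h1, h2 | h2⟩)
    · rw [hsymm]
      apply hadist
      rw [← h1]
      exact keyj p.1 p.2 q.2 h2
    · apply hadist
      rw [h1]
      exact keyj q.1 q.2 p.2 h2
    · rw [hsymm]
      apply hadist
      rw [← h1]
      exact keyi p.1 q.1 p.2 h2
    · apply hadist
      rw [h1]
      exact keyi q.1 p.1 q.2 h2
  constructor
  · constructor
    · intro i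
      rw [Fintype.bijective_iff_injective_and_card]
      refine ⟨?_, hcard.symm⟩
      intro a b hab
      simp only [hLdef] at hab
      apply hval
      apply hcancel
      linear_combination hab
    · intro j
      rw [Fintype.bijective_iff_injective_and_card]
      refine ⟨?_, hcard.symm⟩
      intro a b hab
      simp only [hLdef] at hab
      apply hval
      apply hcancel
      linear_combination hab
  · have hS : {d | ∃ p q : Fin n × Fin n, Adjacent p q ∧
        d = adist n (L p.1 p.2) (L q.1 q.2)} = {k} := by
      ext d
      simp only [Set.mem_setOf_eq, Set.mem_singleton_iff]
      constructor
      · rintro ⟨p, q, hpq, rfl⟩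
        exact hadj p q hpq
      · rintro rfl
        have h01 : Adjacent ((⟨0, by omega⟩ : Fin n), (⟨0, by omega⟩ : Fin n))
            ((⟨0, by omega⟩ : Fin n), (⟨1, by omega⟩ : Fin n)) :=
          Or.inl ⟨rfl, Or.inl rfl⟩
        exact ⟨_, _, h01, (hadj _ _ h01).symm⟩
    unfold innerDist
    rw [hS, csInf_singleton]
end

section
/- For even n ≥ 4, there exists a Latin square of order n with inner distance (n-2)/2; explicitly, the array with entry m(i,j) = (1 + (i-1)*(n-2)/2 + (j-1)*(n-2)/2 + ⌊(i-1)/R⌋ + ⌊(j-1)/R⌋) mod n, where R = n / gcd(n, (n-2)/2), is a Latin square and every pair of adjacent entries has distance (n-2)/2 or n/2. -/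
lemma coprime_succ (k : ℕ) : Nat.Coprime (k+1) k := by
  unfold Nat.Coprime
  rw [show k+1 = 1+k from by ring, Nat.gcd_add_self_left]
  exact Nat.gcd_one_left k

lemma gcd_calc (n k : ℕ) (hn : n = 2*k+2) : Nat.gcd n k = Nat.gcd 2 k := by
  subst hn
  rw [Nat.gcd_comm, show 2*k+2 = 2 + 2*k from by ring, Nat.gcd_add_mul_right_right,
    Nat.gcd_comm]

lemma R_val (n k : ℕ) (hn : n = 2*k+2) (R : ℕ) (hR : R = n / Nat.gcd n k) :
    (k % 2 = 1 ∧ R = n) ∨ (k % 2 = 0 ∧ R = k + 1) := by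
  rw [gcd_calc n k hn] at hR
  subst hn
  rcases Nat.even_or_odd k with he | ho
  · right
    have h2 : Nat.gcd 2 k = 2 := Nat.gcd_eq_left he.two_dvd
    rw [h2] at hR
    exact ⟨Nat.even_iff.mp he, by omega⟩
  · left
    have hk1 : k % 2 = 1 := Nat.odd_iff.mp ho
    have h2 : Nat.gcd 2 k = 1 := by rw [Nat.gcd_rec, hk1]; simp
    rw [h2] at hR
    exact ⟨hk1, by omega⟩

lemma key_inj (n k R : ℕ) (hn : n = 2*k+2) (hk : 1 ≤ k)
    (hR : R = n / Nat.gcd n k)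
    (a b : ℕ) (ha : a < n) (hb : b < n)
    (h : ((a*k + a/R : ℕ) : ZMod n) = ((b*k + b/R : ℕ) : ZMod n)) :
    a = b := by
  haveI : NeZero n := ⟨by omega⟩
  rcases R_val n k hn R hR with ⟨hko, hRn⟩ | ⟨hke, hRe⟩
  · -- k odd, R = n
    rw [hRn, Nat.div_eq_of_lt ha, Nat.div_eq_of_lt hb] at h
    push_cast at h
    have hcop : Nat.Coprime k n := by
      have hg := gcd_calc n k hn
      have h2 : Nat.gcd 2 k = 1 := by rw [Nat.gcd_rec, hko]; simp
      unfold Nat.Coprime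
      rw [Nat.gcd_comm, hg, h2]
    have hu : IsUnit (k : ZMod n) := (ZMod.isUnit_iff_coprime k n).mpr hcop
    simp only [add_zero] at h
    have h2 : (a : ZMod n) = b := hu.mul_right_cancel h
    have := congrArg ZMod.val h2
    rwa [ZMod.val_natCast_of_lt ha, ZMod.val_natCast_of_lt hb] at this
  · -- k even, R = k+1
    subst hRe
    have htk : k = 2 * (k/2) := by omega
    obtain ⟨t, htk⟩ : ∃ t, k = 2 * t := ⟨k/2, htk⟩
    have hmod := (ZMod.natCast_eq_natCast_iff _ _ _).mp h
    have hdvd0 := hmod.dvd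
    have ea : (k+1) * (a/(k+1)) + a % (k+1) = a := Nat.div_add_mod a (k+1)
    have eb : (k+1) * (b/(k+1)) + b % (k+1) = b := Nat.div_add_mod b (k+1)
    have hra1 : a % (k+1) < k+1 := Nat.mod_lt _ (by omega)
    have hrb1 : b % (k+1) < k+1 := Nat.mod_lt _ (by omega)
    have hda1 : a / (k+1) ≤ 1 := by
      have : a / (k+1) < 2 := (Nat.div_lt_iff_lt_mul (by omega)).mpr (by omega)
      omega
    have hdb1 : b / (k+1) ≤ 1 := by
      have : b / (k+1) < 2 := (Nat.div_lt_iff_lt_mul (by omega)).mpr (by omega)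
      omega
    generalize hda : a / (k+1) = da at *
    generalize hdb : b / (k+1) = db at *
    generalize hrae : a % (k+1) = ra at *
    generalize hrbe : b % (k+1) = rb at *
    have hdvd : (n:ℤ) ∣ ((b:ℤ)*k + db) - ((a:ℤ)*k + da) := by
      have e : ((b*k + db : ℕ):ℤ) - ((a*k + da : ℕ):ℤ)
          = ((b:ℤ)*k + db) - ((a:ℤ)*k + da) := by push_cast; ring
      rw [← e]
      exact hdvd0
    have h2dvd : (2 : ℤ) ∣ (db : ℤ) - da := by
      have e1 : (db : ℤ) - da =
          (((b:ℤ)*k + db) - ((a:ℤ)*k + da)) - 2 * (((b:ℤ) - a) * t) := by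
        push_cast [htk]; ring
      rw [e1]
      refine dvd_sub (dvd_trans ⟨(k:ℤ)+1, by push_cast [hn]; ring⟩ hdvd) (Dvd.intro _ rfl)
    have hdadb : da = db := by
      obtain ⟨c, hc⟩ := h2dvd
      omega
    have hdvd2 : (n : ℤ) ∣ ((b:ℤ) - a) * k := by
      have e2 : ((b:ℤ) - a) * k = (((b:ℤ)*k + db) - ((a:ℤ)*k + da)) := by
        rw [hdadb]; ring
      rw [e2]; exact hdvd
    have hdvd3 : ((k:ℤ)+1) ∣ ((b:ℤ) - a) * t := by
      obtain ⟨c, hc⟩ := hdvd2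
      refine ⟨c, ?_⟩
      have e3 : (2:ℤ) * (((b:ℤ) - a) * t) = 2 * (((k:ℤ)+1) * c) := by
        calc (2:ℤ) * (((b:ℤ) - a) * t) = ((b:ℤ) - a) * k := by
              rw [htk]; push_cast; ring
          _ = (n:ℤ) * c := hc
          _ = 2 * (((k:ℤ)+1) * c) := by rw [hn]; push_cast; ring
      exact mul_left_cancel₀ two_ne_zero e3
    have hcop : Nat.Coprime (k+1) t :=
      Nat.Coprime.coprime_dvd_right ⟨2, by omega⟩ (coprime_succ k)
    have hcopZ : IsCoprime ((k:ℤ)+1) (t:ℤ) := by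
      have h5 := Nat.isCoprime_iff_coprime.mpr hcop
      push_cast at h5
      exact h5
    have hdvd4 : ((k:ℤ)+1) ∣ ((b:ℤ) - a) := hcopZ.dvd_of_dvd_mul_right hdvd3
    have ebound : (b:ℤ) - a = (rb:ℤ) - ra := by
      have ea' : ((k:ℤ)+1) * da + ra = a := by exact_mod_cast ea
      have eb' : ((k:ℤ)+1) * db + rb = b := by exact_mod_cast eb
      rw [hdadb] at ea'
      linarith
    have hz : (b:ℤ) - a = 0 := by
      refine Int.eq_zero_of_abs_lt_dvd hdvd4 ?_
      rw [abs_lt]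
      refine ⟨by rw [ebound]; omega, by rw [ebound]; omega⟩
    omega

lemma adist_add (n : ℕ) (hn : 0 < n) (d : ℕ) (hd : 0 < d) (hdn : d < n) (c : ZMod n) :
    adist n c (c + (d:ZMod n)) = min d (n - d) := by
  haveI : NeZero n := ⟨hn.ne'⟩
  have h1 : c - (c + (d:ZMod n)) = -(d:ZMod n) := by ring
  have h2 : (c + (d:ZMod n)) - c = (d:ZMod n) := by ring
  have hv : ((d:ZMod n)).val = d := ZMod.val_natCast_of_lt hdn
  have hne : (d:ZMod n) ≠ 0 := by
    intro h0
    rw [h0, ZMod.val_zero] at hv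
    omega
  unfold adist
  rw [h1, h2, ZMod.neg_val, if_neg hne, hv, min_comm]

theorem even_max_inner_distance (n : ℕ) (hn : 4 ≤ n) (heven : Even n)
    (R : ℕ) (hR : R = n / Nat.gcd n ((n - 2) / 2))
    (L : Fin n → Fin n → ZMod n)
    (hL : L = fun i j : Fin n =>
      ((1 + i.val * ((n - 2) / 2) + j.val * ((n - 2) / 2)
        + i.val / R + j.val / R : ℕ) : ZMod n)) :
    IsLatin n L ∧ innerDist n L = (n - 2) / 2 ∧
    ∀ p q : Fin n × Fin n, Adjacent p q →
      adist n (L p.1 p.2) (L q.1 q.2) = (n - 2) / 2 ∨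
      adist n (L p.1 p.2) (L q.1 q.2) = n / 2 := by
  have heven' := Nat.even_iff.mp heven
  set k := (n - 2) / 2 with hkdef
  have hn2 : n = 2 * k + 2 := by omega
  have hk1 : 1 ≤ k := by omega
  haveI : NeZero n := ⟨by omega⟩
  have hRcases := R_val n k hn2 R hR
  have hR2 : 2 ≤ R := by rcases hRcases with ⟨_, h⟩ | ⟨_, h⟩ <;> omega
  -- step lemma
  have hstep : ∀ j : ℕ, ∃ δ, δ ≤ 1 ∧ (j+1)*k + (j+1)/R = j*k + j/R + k + δ := by
    intro j
    have hdiv1 : (j+1)/R ≤ j/R + 1 := by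
      calc (j+1)/R ≤ (j+R)/R := Nat.div_le_div_right (by omega)
        _ = j/R + 1 := Nat.add_div_right _ (by omega)
    have hdiv2 : j/R ≤ (j+1)/R := Nat.div_le_div_right (by omega)
    refine ⟨(j+1)/R - j/R, by omega, ?_⟩
    have : (j+1)*k = j*k + k := by ring
    omega
  -- symmetry of L
  have hswap : ∀ i j : Fin n, L i j = L j i := by
    intro i j
    rw [hL]
    simp only
    congr 1
    ring
  -- row adjacency
  have hrow : ∀ (i j j' : Fin n), j.val + 1 = j'.val →
      adist n (L i j) (L i j') = k ∨ adist n (L i j) (L i j') = k + 1 := by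
    intro i j j' hjj
    obtain ⟨δ, hδ1, hδ2⟩ := hstep j.val
    have hLeq : L i j' = L i j + ((k + δ : ℕ) : ZMod n) := by
      rw [hL]
      simp only
      rw [← Nat.cast_add]
      congr 1
      rw [← hjj]
      have hkexp : (j.val + 1) * k = j.val * k + k := by ring
      omega
    have hval : adist n (L i j) (L i j') = min (k+δ) (n - (k+δ)) := by
      rw [hLeq]
      exact adist_add n (by omega) (k+δ) (by omega) (by omega) _
    rcases Nat.le_one_iff_eq_zero_or_eq_one.mp hδ1 with h0 | h1
    · left
      rw [hval, h0, add_zero]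
      exact min_eq_left (by omega)
    · right
      rw [hval, h1]
      have : n - (k + 1) = k + 1 := by omega
      rw [this, min_self]
  have hsym : ∀ u v : ZMod n, adist n u v = adist n v u := fun u v => min_comm _ _
  -- all adjacent pairs
  have hmain : ∀ p q : Fin n × Fin n, Adjacent p q →
      adist n (L p.1 p.2) (L q.1 q.2) = k ∨ adist n (L p.1 p.2) (L q.1 q.2) = k + 1 := by
    intro p q hpq
    rcases hpq with ⟨h1, h2 | h2⟩ | ⟨h1, h2 | h2⟩
    · rw [← h1]; exact hrow p.1 p.2 q.2 h2
    · rw [← h1, hsym]; exact hrow p.1 q.2 p.2 h2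
    · rw [← h1, hswap p.1 p.2, hswap q.1 p.2]; exact hrow p.2 p.1 q.1 h2
    · rw [← h1, hswap p.1 p.2, hswap q.1 p.2, hsym]; exact hrow p.2 q.1 p.1 h2
  -- the (0,0)-(0,1) pair realizes k
  have hzero : adist n (L ⟨0, by omega⟩ ⟨0, by omega⟩) (L ⟨0, by omega⟩ ⟨1, by omega⟩)
      = k := by
    have e0 : L ⟨0, by omega⟩ ⟨0, by omega⟩ = ((1 : ℕ) : ZMod n) := by
      rw [hL]; simp
    have e1 : L ⟨0, by omega⟩ ⟨1, by omega⟩ = ((1 + k : ℕ) : ZMod n) := by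
      rw [hL]
      simp [Nat.div_eq_of_lt (show 1 < R by omega)]
    have e2 : ((1 + k : ℕ) : ZMod n) = ((1:ℕ) : ZMod n) + ((k:ℕ) : ZMod n) := by
      push_cast; ring
    rw [e0, e1, e2, adist_add n (by omega) k (by omega) (by omega)]
    exact min_eq_left (by omega)
  have hmem : k ∈ {d | ∃ p q : Fin n × Fin n, Adjacent p q ∧
      d = adist n (L p.1 p.2) (L q.1 q.2)} := by
    exact ⟨(⟨0, by omega⟩, ⟨0, by omega⟩), (⟨0, by omega⟩, ⟨1, by omega⟩),
      Or.inl ⟨rfl, Or.inl rfl⟩, hzero.symm⟩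
  refine ⟨?_, ?_, ?_⟩
  · -- Latin
    have hrowbij : ∀ i : Fin n, Function.Bijective fun j => L i j := by
      intro i
      rw [Fintype.bijective_iff_injective_and_card]
      constructor
      · intro j j' hjj'
        simp only [hL] at hjj'
        apply Fin.ext
        apply key_inj n k R hn2 hk1 hR j.val j'.val j.isLt j'.isLt
        push_cast at hjj' ⊢
        linear_combination hjj'
      · simp [ZMod.card]
    refine ⟨hrowbij, ?_⟩
    intro j
    have : (fun i => L i j) = (fun i => L j i) := funext fun i => hswap i j
    rw [this]
    exact hrowbij j
  · -- innerDist
    unfold innerDist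
    refine le_antisymm (Nat.sInf_le hmem) (le_csInf ⟨k, hmem⟩ ?_)
    rintro d ⟨p, q, hpq, rfl⟩
    rcases hmain p q hpq with h | h <;> omega
  · -- adjacent distances
    intro p q hpq
    rcases hmain p q hpq with h | h
    · left; exact h
    · right; rw [h]; omega
end

section
/- For n ≥ 3, the maximum inner distance over all Latin squares of order n equals ⌊(n-1)/2⌋. -/
/-- The row pattern: interleave low and high values. -/
def rfun (n j : ℕ) : ℕ := j / 2 + (j % 2) * ((n + 1) / 2)

lemma rfun_lt {n j : ℕ} (hj : j < n) : rfun n j < n := by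
  unfold rfun
  rcases Nat.mod_two_eq_zero_or_one j with h | h <;> rw [h] <;> omega

lemma rfun_inj {n a b : ℕ} (ha : a < n) (hb : b < n)
    (h : rfun n a = rfun n b) : a = b := by
  unfold rfun at h
  rcases Nat.mod_two_eq_zero_or_one a with h1 | h1 <;>
    rcases Nat.mod_two_eq_zero_or_one b with h2 | h2 <;>
    rw [h1, h2] at h <;> omega

lemma adist_comm (n : ℕ) (u v : ZMod n) : adist n u v = adist n v u :=
  Nat.min_comm _ _

lemma adist_add_left (n : ℕ) (a u v : ZMod n) :
    adist n (a + u) (a + v) = adist n u v := by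
  simp [adist, add_sub_add_left_eq_sub]

lemma adist_cast {n : ℕ} (hn : 0 < n) {x y : ℕ} (hx : x < n) (hy : y < n) :
    adist n (x : ZMod n) (y : ZMod n) = min ((x + (n - y)) % n) ((y + (n - x)) % n) := by
  haveI : NeZero n := ⟨by omega⟩
  have h1 : ((x + (n - y) : ℕ) : ZMod n) = (x : ZMod n) - y := by
    push_cast [Nat.cast_sub hy.le]
    rw [ZMod.natCast_self]
    ring
  have h2 : ((y + (n - x) : ℕ) : ZMod n) = (y : ZMod n) - x := by
    push_cast [Nat.cast_sub hx.le]
    rw [ZMod.natCast_self]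
    ring
  unfold adist
  rw [← h1, ← h2, ZMod.val_natCast, ZMod.val_natCast]

lemma adist_rfun_even {n j : ℕ} (hn : 3 ≤ n) (hj : j + 1 < n) (hpar : j % 2 = 0) :
    adist n (rfun n j : ZMod n) (rfun n (j + 1) : ZMod n)
      = min (n - (n + 1) / 2) ((n + 1) / 2) := by
  have hx : rfun n j < n := rfun_lt (by omega)
  have hy : rfun n (j + 1) < n := rfun_lt hj
  rw [adist_cast (by omega) hx hy]
  have hpar' : (j + 1) % 2 = 1 := by omega
  have e1 : rfun n j + (n - rfun n (j + 1)) = n - (n + 1) / 2 := by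
    simp only [rfun, hpar, hpar'] at hx hy ⊢; omega
  have e2 : rfun n (j + 1) + (n - rfun n j) = n + (n + 1) / 2 := by
    simp only [rfun, hpar, hpar'] at hx hy ⊢; omega
  rw [e1, e2, Nat.mod_eq_of_lt (by omega), Nat.add_mod_left,
    Nat.mod_eq_of_lt (by omega)]

lemma adist_rfun_odd {n j : ℕ} (hn : 3 ≤ n) (hj : j + 1 < n) (hpar : j % 2 = 1) :
    adist n (rfun n j : ZMod n) (rfun n (j + 1) : ZMod n)
      = min ((n + 1) / 2 - 1) (n - (n + 1) / 2 + 1) := by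
  have hx : rfun n j < n := rfun_lt (by omega)
  have hy : rfun n (j + 1) < n := rfun_lt hj
  rw [adist_cast (by omega) hx hy]
  have hpar' : (j + 1) % 2 = 0 := by omega
  have e1 : rfun n j + (n - rfun n (j + 1)) = n + ((n + 1) / 2 - 1) := by
    simp only [rfun, hpar, hpar'] at hx hy ⊢; omega
  have e2 : rfun n (j + 1) + (n - rfun n j) = n - (n + 1) / 2 + 1 := by
    simp only [rfun, hpar, hpar'] at hx hy ⊢; omega
  rw [e1, e2, Nat.add_mod_left, Nat.mod_eq_of_lt (by omega),
    Nat.mod_eq_of_lt (by omega)]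

lemma adist_rfun_ge {n j : ℕ} (hn : 3 ≤ n) (hj : j + 1 < n) :
    (n - 1) / 2 ≤ adist n (rfun n j : ZMod n) (rfun n (j + 1) : ZMod n) := by
  rcases Nat.mod_two_eq_zero_or_one j with h | h
  · rw [adist_rfun_even hn hj h]; omega
  · rw [adist_rfun_odd hn hj h]; omega

lemma adist_rfun_ge' {n a b : ℕ} (hn : 3 ≤ n) (hb : b < n) (hab : a + 1 = b) :
    (n - 1) / 2 ≤ adist n (rfun n a : ZMod n) (rfun n b : ZMod n) := by
  subst hab; exact adist_rfun_ge hn hb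

/-- If the adjacent distance exceeds `(n-1)/2`, then `n` is even and the symbols
differ by `n/2`. -/
lemma eq_add_half {n : ℕ} (hn : 3 ≤ n) {u v : ZMod n}
    (h : (n - 1) / 2 < adist n u v) :
    v = u + ((n / 2 : ℕ) : ZMod n) ∧ n % 2 = 0 := by
  haveI : NeZero n := ⟨by omega⟩
  have huv : u ≠ v := by
    rintro rfl
    simp [adist] at h
  have hsub : u - v ≠ 0 := sub_ne_zero.mpr huv
  have ha0 : (u - v).val ≠ 0 := fun h0 => hsub ((ZMod.val_eq_zero _).mp h0)
  have haval : (v - u).val = n - (u - v).val := by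
    have : v - u = -(u - v) := by ring
    rw [this, ZMod.neg_val, if_neg hsub]
  have halt : (u - v).val < n := ZMod.val_lt _
  unfold adist at h
  rw [haval] at h
  have ha : (u - v).val = n / 2 ∧ n % 2 = 0 := by omega
  refine ⟨?_, ha.2⟩
  have hv : (v - u).val = ((n / 2 : ℕ) : ZMod n).val := by
    rw [ZMod.val_cast_of_lt (by omega), haval]; omega
  have := ZMod.val_injective n hv
  rw [← this]
  ring

theorem max_inner_distance (n : ℕ) (hn : 3 ≤ n) :
    IsGreatest {d : ℕ | ∃ L : Fin n → Fin n → ZMod n,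
      IsLatin n L ∧ innerDist n L = d} ((n - 1) / 2) := by
  haveI : NeZero n := ⟨by omega⟩
  constructor
  · -- membership: the interleaving construction
    set r : Fin n → ZMod n := fun j => ((rfun n j.val : ℕ) : ZMod n) with hr
    have hrinj : Function.Injective r := by
      intro a b hab
      have : ((rfun n a.val : ℕ) : ZMod n).val = ((rfun n b.val : ℕ) : ZMod n).val :=
        congrArg ZMod.val hab
      rw [ZMod.val_cast_of_lt (rfun_lt a.isLt), ZMod.val_cast_of_lt (rfun_lt b.isLt)] at this
      exact Fin.ext (rfun_inj a.isLt b.isLt this)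
    have hrbij : Function.Bijective r := by
      rw [Fintype.bijective_iff_injective_and_card]
      exact ⟨hrinj, by simp [ZMod.card]⟩
    refine ⟨fun i j => r i + r j, ⟨fun i => ?_, fun j => ?_⟩, ?_⟩
    · exact (Equiv.addLeft (r i)).bijective.comp hrbij
    · have : (fun i => r i + r j) = fun i => r j + r i := by
        funext i; ring
      rw [this]
      exact (Equiv.addLeft (r j)).bijective.comp hrbij
    · -- innerDist equals (n-1)/2
      have hmem : ((n - 1) / 2 : ℕ) ∈
          {d | ∃ p q : Fin n × Fin n, Adjacent p q ∧
            d = adist n ((r p.1 + r p.2)) ((r q.1 + r q.2))} := by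
        refine ⟨(⟨0, by omega⟩, ⟨1, by omega⟩), (⟨0, by omega⟩, ⟨2, by omega⟩),
          Or.inl ⟨rfl, Or.inl rfl⟩, ?_⟩
        rw [adist_add_left]
        have h12 : adist n (rfun n 1 : ZMod n) (rfun n 2 : ZMod n)
            = min ((n + 1) / 2 - 1) (n - (n + 1) / 2 + 1) :=
          adist_rfun_odd hn (by omega) rfl
        show ((n - 1) / 2 : ℕ)
          = adist n ((rfun n 1 : ℕ) : ZMod n) ((rfun n 2 : ℕ) : ZMod n)
        rw [h12]
        omega
      refine le_antisymm (Nat.sInf_le hmem) (le_csInf ⟨_, hmem⟩ ?_)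
      rintro d ⟨p, q, hadj, rfl⟩
      rcases hadj with ⟨h1, h2⟩ | ⟨h1, h2⟩
      · rw [← h1, adist_add_left]
        rcases h2 with h2 | h2
        · exact adist_rfun_ge' hn (h2 ▸ q.2.isLt) h2
        · rw [adist_comm]
          exact adist_rfun_ge' hn (h2 ▸ p.2.isLt) h2
      · rw [← h1]
        have hc : ∀ a b : Fin n, adist n (r a + r p.2) (r b + r p.2)
            = adist n (r a) (r b) := by
          intro a b
          rw [show r a + r p.2 = r p.2 + r a by ring,
            show r b + r p.2 = r p.2 + r b by ring, adist_add_left]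
        rw [hc]
        rcases h2 with h2 | h2
        · exact adist_rfun_ge' hn (h2 ▸ q.1.isLt) h2
        · rw [adist_comm]
          exact adist_rfun_ge' hn (h2 ▸ p.1.isLt) h2
  · -- upper bound
    rintro d ⟨L, ⟨hrow, _⟩, rfl⟩
    set S := {d | ∃ p q : Fin n × Fin n, Adjacent p q ∧
      d = adist n (L p.1 p.2) (L q.1 q.2)} with hS
    have h01 : adist n (L ⟨0, by omega⟩ ⟨0, by omega⟩) (L ⟨0, by omega⟩ ⟨1, by omega⟩) ∈ S :=
      ⟨(⟨0, by omega⟩, ⟨0, by omega⟩), (⟨0, by omega⟩, ⟨1, by omega⟩),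
        Or.inl ⟨rfl, Or.inl rfl⟩, rfl⟩
    have h12 : adist n (L ⟨0, by omega⟩ ⟨1, by omega⟩) (L ⟨0, by omega⟩ ⟨2, by omega⟩) ∈ S :=
      ⟨(⟨0, by omega⟩, ⟨1, by omega⟩), (⟨0, by omega⟩, ⟨2, by omega⟩),
        Or.inl ⟨rfl, Or.inl rfl⟩, rfl⟩
    have key : adist n (L ⟨0, by omega⟩ ⟨0, by omega⟩) (L ⟨0, by omega⟩ ⟨1, by omega⟩)
          ≤ (n - 1) / 2 ∨
        adist n (L ⟨0, by omega⟩ ⟨1, by omega⟩) (L ⟨0, by omega⟩ ⟨2, by omega⟩)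
          ≤ (n - 1) / 2 := by
      by_contra hcon
      push_neg at hcon
      obtain ⟨hc1, hc2⟩ := hcon
      obtain ⟨he1, hev⟩ := eq_add_half hn hc1
      obtain ⟨he2, -⟩ := eq_add_half hn hc2
      have hzero : ((n / 2 : ℕ) : ZMod n) + ((n / 2 : ℕ) : ZMod n) = 0 := by
        rw [← Nat.cast_add, show n / 2 + n / 2 = n by omega, ZMod.natCast_self]
      have heq : L ⟨0, by omega⟩ ⟨2, by omega⟩ = L ⟨0, by omega⟩ ⟨0, by omega⟩ := by
        rw [he2, he1, add_assoc, hzero, add_zero]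
      have := (hrow ⟨0, by omega⟩).injective heq
      simp only [Fin.mk.injEq] at this
      omega
    rcases key with h | h
    · exact le_trans (Nat.sInf_le h01) h
    · exact le_trans (Nat.sInf_le h12) h
end

section
/- Let n be odd, n ≥ 5, and let (u_1, ..., u_n) be a sequence of distinct residues mod n such that every pair of consecutive entries has distance exactly (n-1)/2 (i.e., u_{k+1} - u_k ≡ ±(n-1)/2 mod n). Then either u_{k+1} - u_k ≡ (n-1)/2 mod n for all k, or u_{k+1} - u_k ≡ -(n-1)/2 mod n for all k. -/
theorem constant_increment_of_max_distance (n : ℕ) (hn : 5 ≤ n) (hodd : Odd n)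
    (u : Fin n → ZMod n) (hinj : Function.Injective u)
    (h : ∀ k : ℕ, (hk : k + 1 < n) →
      u ⟨k + 1, hk⟩ - u ⟨k, by omega⟩ = (((n - 1) / 2 : ℕ) : ZMod n) ∨
      u ⟨k + 1, hk⟩ - u ⟨k, by omega⟩ = -(((n - 1) / 2 : ℕ) : ZMod n)) :
    (∀ k : ℕ, (hk : k + 1 < n) →
      u ⟨k + 1, hk⟩ - u ⟨k, by omega⟩ = (((n - 1) / 2 : ℕ) : ZMod n)) ∨
    (∀ k : ℕ, (hk : k + 1 < n) →
      u ⟨k + 1, hk⟩ - u ⟨k, by omega⟩ = -(((n - 1) / 2 : ℕ) : ZMod n)) := by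
  haveI : NeZero n := ⟨by omega⟩
  have hm2 : 2 * ((n - 1) / 2) = n - 1 := by obtain ⟨t, ht⟩ := hodd; omega
  have hne : (((n - 1) / 2 : ℕ) : ZMod n) ≠ -(((n - 1) / 2 : ℕ) : ZMod n) := by
    intro hc
    have h2 : ((n - 1 : ℕ) : ZMod n) = 0 := by
      rw [← hm2]; push_cast; linear_combination hc
    have hv := ZMod.val_cast_of_lt (show n - 1 < n by omega)
    rw [h2] at hv
    simp at hv
    omega
  -- sign flips are impossible
  have flip : ∀ (c : ZMod n) (k : ℕ) (hk : k + 1 + 1 < n),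
      u ⟨k + 1, by omega⟩ - u ⟨k, by omega⟩ = c →
      u ⟨k + 1 + 1, hk⟩ - u ⟨k + 1, by omega⟩ = -c → False := by
    intro c k hk h1 h2
    have heq : u ⟨k + 1 + 1, hk⟩ = u ⟨k, by omega⟩ := by
      linear_combination h1 + h2
    have := hinj heq
    simp [Fin.ext_iff] at this
    omega
  have h01 : 0 + 1 < n := by omega
  rcases h 0 h01 with hc | hc
  · left
    intro k
    induction k with
    | zero => intro hk; exact hc
    | succ k ih =>
      intro hk
      have hk1 : k + 1 < n := by omega
      have ihk := ih hk1
      rcases h (k + 1) hk with hd | hd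
      · exact hd
      · exact absurd hd (fun hd => flip _ k hk ihk hd)
  · right
    intro k
    induction k with
    | zero => intro hk; exact hc
    | succ k ih =>
      intro hk
      have hk1 : k + 1 < n := by omega
      have ihk := ih hk1
      rcases h (k + 1) hk with hd | hd
      · exfalso
        refine flip _ k hk ihk ?_
        rw [hd, neg_neg]
      · exact hd
end

section
/- For odd n ≥ 5, there are exactly 4n Latin squares of order n with inner distance (n-1)/2, and each such square is a circulant: it satisfies m(i,j) = (m(1,1) + (i-1)*r + (j-1)*c) mod n with r, c ∈ {(n-1)/2, (n+1)/2}. -/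
namespace MaxInner

variable {n k : ℕ}

lemma nk_cast (hnk : n = 2*k+1) : ((k : ℕ) : ZMod n) + ((k+1 : ℕ) : ZMod n) = 0 := by
  rw [← Nat.cast_add, show k + (k+1) = n from by omega]
  exact ZMod.natCast_self n

lemma adist_comm (u v : ZMod n) : adist n u v = adist n v u := by
  unfold adist; exact min_comm _ _

lemma adist_of_diff (hnk : n = 2*k+1) (hk : 2 ≤ k) {u v : ZMod n}
    (h : u - v = ((k:ℕ):ZMod n) ∨ u - v = ((k+1:ℕ):ZMod n)) : adist n u v = k := by
  haveI : NeZero n := ⟨by omega⟩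
  have hvk : ((k:ℕ):ZMod n).val = k := ZMod.val_cast_of_lt (by omega)
  have hvk1 : ((k+1:ℕ):ZMod n).val = k+1 := ZMod.val_cast_of_lt (by omega)
  have hsum := nk_cast hnk
  rcases h with h | h
  · have h2 : v - u = ((k+1:ℕ):ZMod n) := by linear_combination -h - hsum
    unfold adist; rw [h, h2, hvk, hvk1]; omega
  · have h2 : v - u = ((k:ℕ):ZMod n) := by linear_combination -h - hsum
    unfold adist; rw [h, h2, hvk, hvk1]; omega

lemma diff_of_adist (hnk : n = 2*k+1) (hk : 2 ≤ k) {u v : ZMod n}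
    (h : adist n u v = k) : u - v = ((k:ℕ):ZMod n) ∨ u - v = ((k+1:ℕ):ZMod n) := by
  haveI : NeZero n := ⟨by omega⟩
  have hne : u - v ≠ 0 := by
    intro h0
    have h1 : v - u = 0 := by linear_combination -h0
    unfold adist at h
    rw [h0, h1] at h
    simp [ZMod.val_zero] at h
    omega
  have ha1 : (u - v).val ≠ 0 := fun hh => hne ((ZMod.val_eq_zero _).mp hh)
  have ha2 : (u - v).val < n := ZMod.val_lt _
  have hvneg : (v - u).val = n - (u - v).val := by
    rw [show v - u = -(u - v) from by ring, ZMod.neg_val]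
    simp [hne]
  unfold adist at h
  rw [hvneg] at h
  have hcast : (((u - v).val : ℕ) : ZMod n) = u - v := by
    simp [ZMod.natCast_val, ZMod.cast_id]
  have : (u - v).val = k ∨ (u - v).val = k + 1 := by
    rcases le_total ((u-v).val) (n - (u-v).val) with hle | hle
    · rw [min_eq_left hle] at h; omega
    · rw [min_eq_right hle] at h; omega
  rcases this with hh | hh
  · left; rw [← hcast, hh]
  · right; rw [← hcast, hh]

lemma small_cast_ne (hnk : n = 2*k+1) (hk : 2 ≤ k) {m : ℕ} (h0 : m ≠ 0) (h1 : m < n) :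
    ((m : ℕ) : ZMod n) ≠ 0 := by
  haveI : NeZero n := ⟨by omega⟩
  intro h
  have := (ZMod.natCast_eq_zero_iff m n).mp h
  have := Nat.le_of_dvd (by omega) this
  omega

/-- In a row (or column) of a Latin square where every consecutive difference is
`k` or `k+1` mod `n = 2k+1`, the difference is constant. -/
lemma row_const (hnk : n = 2*k+1) (hk : 2 ≤ k) {M : Fin n → ZMod n}
    (hinj : Function.Injective M)
    (hstep : ∀ j, ∀ h : j + 1 < n,
      M ⟨j+1, h⟩ - M ⟨j, by omega⟩ = ((k:ℕ):ZMod n) ∨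
      M ⟨j+1, h⟩ - M ⟨j, by omega⟩ = ((k+1:ℕ):ZMod n)) :
    ∀ j, ∀ h : j < n,
      M ⟨j, h⟩ = M ⟨0, by omega⟩ + (j : ZMod n) * (M ⟨1, by omega⟩ - M ⟨0, by omega⟩) := by
  have hsum := nk_cast hnk
  have hconst : ∀ j, ∀ h : j + 1 < n,
      M ⟨j+1, h⟩ - M ⟨j, by omega⟩ = M ⟨1, by omega⟩ - M ⟨0, by omega⟩ := by
    intro j
    induction j with
    | zero => intro h; rfl
    | succ j ih =>
      intro h
      have hprev := ih (by omega)
      have h1 := hstep (j+1) h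
      have h2 := hstep j (by omega)
      have hbad : ((M ⟨j+2, h⟩ - M ⟨j+1, by omega⟩ = ((k:ℕ):ZMod n) ∧
          M ⟨j+1, by omega⟩ - M ⟨j, by omega⟩ = ((k+1:ℕ):ZMod n)) ∨
          (M ⟨j+2, h⟩ - M ⟨j+1, by omega⟩ = ((k+1:ℕ):ZMod n) ∧
          M ⟨j+1, by omega⟩ - M ⟨j, by omega⟩ = ((k:ℕ):ZMod n))) → False := by
        rintro (⟨ha, hb⟩ | ⟨ha, hb⟩) <;>
        · have heq : M ⟨j+2, h⟩ = M ⟨j, by omega⟩ := by linear_combination ha + hb + hsum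
          have := hinj heq
          simp only [Fin.mk.injEq] at this
          omega
      rcases h1 with h1 | h1 <;> rcases h2 with h2 | h2
      · rw [h1, ← hprev, h2]
      · exact absurd (Or.inl ⟨h1, h2⟩) hbad
      · exact absurd (Or.inr ⟨h1, h2⟩) hbad
      · rw [h1, ← hprev, h2]
  intro j
  induction j with
  | zero => intro h; simp
  | succ j ih =>
    intro h
    have hj := ih (by omega)
    have hc := hconst j h
    have : M ⟨j+1, h⟩ = M ⟨j, by omega⟩ + (M ⟨1, by omega⟩ - M ⟨0, by omega⟩) := by
      linear_combination hc
    rw [this, hj]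
    push_cast
    ring

lemma inner_to_adist (hnk : n = 2*k+1) (hk : 2 ≤ k) {L : Fin n → Fin n → ZMod n}
    (hI : innerDist n L = k) :
    ∀ p q : Fin n × Fin n, Adjacent p q → adist n (L p.1 p.2) (L q.1 q.2) = k := by
  haveI : NeZero n := ⟨by omega⟩
  intro p q hadj
  set u := L p.1 p.2
  set v := L q.1 q.2
  have hdS : adist n u v ∈
      {d | ∃ p q : Fin n × Fin n, Adjacent p q ∧ d = adist n (L p.1 p.2) (L q.1 q.2)} :=
    ⟨p, q, hadj, rfl⟩
  have hge : k ≤ adist n u v := by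
    rw [← hI]; exact Nat.sInf_le hdS
  have hle : adist n u v ≤ k := by
    by_cases huv : u - v = 0
    · have h1 : v - u = 0 := by linear_combination -huv
      unfold adist; rw [huv, h1]; simp [ZMod.val_zero]
    · have ha1 : (u - v).val ≠ 0 := fun hh => huv ((ZMod.val_eq_zero _).mp hh)
      have ha2 : (u - v).val < n := ZMod.val_lt _
      have hvneg : (v - u).val = n - (u - v).val := by
        rw [show v - u = -(u - v) from by ring, ZMod.neg_val]
        simp [huv]
      unfold adist; rw [hvneg]
      rcases le_total ((u-v).val) (n - (u-v).val) with hle | hle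
      · rw [min_eq_left hle]; omega
      · rw [min_eq_right hle]; omega
  omega

/-- Structure theorem: a Latin square all of whose adjacent distances are `k`
is a circulant. -/
lemma struct (hnk : n = 2*k+1) (hk : 2 ≤ k) {L : Fin n → Fin n → ZMod n}
    (hL : IsLatin n L)
    (hd : ∀ p q : Fin n × Fin n, Adjacent p q → adist n (L p.1 p.2) (L q.1 q.2) = k) :
    ∃ r c : ZMod n, (r = ((k:ℕ):ZMod n) ∨ r = ((k+1:ℕ):ZMod n)) ∧
      (c = ((k:ℕ):ZMod n) ∨ c = ((k+1:ℕ):ZMod n)) ∧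
      ∀ i j : Fin n, L i j = L ⟨0, by omega⟩ ⟨0, by omega⟩
        + (i.val : ZMod n) * r + (j.val : ZMod n) * c := by
  haveI : NeZero n := ⟨by omega⟩
  have hsum := nk_cast hnk
  -- row steps
  have hrowstep : ∀ (i : Fin n), ∀ j, ∀ h : j + 1 < n,
      L i ⟨j+1, h⟩ - L i ⟨j, by omega⟩ = ((k:ℕ):ZMod n) ∨
      L i ⟨j+1, h⟩ - L i ⟨j, by omega⟩ = ((k+1:ℕ):ZMod n) := by
    intro i j h
    apply diff_of_adist hnk hk
    exact hd (i, ⟨j+1, h⟩) (i, ⟨j, by omega⟩) (Or.inl ⟨rfl, Or.inr rfl⟩)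
  have hcolstep : ∀ (j : Fin n), ∀ i, ∀ h : i + 1 < n,
      L ⟨i+1, h⟩ j - L ⟨i, by omega⟩ j = ((k:ℕ):ZMod n) ∨
      L ⟨i+1, h⟩ j - L ⟨i, by omega⟩ j = ((k+1:ℕ):ZMod n) := by
    intro j i h
    apply diff_of_adist hnk hk
    exact hd (⟨i+1, h⟩, j) (⟨i, by omega⟩, j) (Or.inr ⟨rfl, Or.inr rfl⟩)
  have hrow : ∀ (i : Fin n), ∀ j, ∀ h : j < n,
      L i ⟨j, h⟩ = L i ⟨0, by omega⟩
        + (j : ZMod n) * (L i ⟨1, by omega⟩ - L i ⟨0, by omega⟩) :=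
    fun i => row_const hnk hk (hL.1 i).injective (hrowstep i)
  have hcol : ∀ (j : Fin n), ∀ i, ∀ h : i < n,
      L ⟨i, h⟩ j = L ⟨0, by omega⟩ j
        + (i : ZMod n) * (L ⟨1, by omega⟩ j - L ⟨0, by omega⟩ j) :=
    fun j => row_const hnk hk (hL.2 j).injective (hcolstep j)
  set z : Fin n := ⟨0, by omega⟩
  set o : Fin n := ⟨1, by omega⟩
  set r : ZMod n := L o z - L z z with hrdef
  set c' : ZMod n := L o o - L z o with hc'def
  have hrmem : r = ((k:ℕ):ZMod n) ∨ r = ((k+1:ℕ):ZMod n) := hcolstep z 0 (by omega)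
  have hc'mem : c' = ((k:ℕ):ZMod n) ∨ c' = ((k+1:ℕ):ZMod n) := hcolstep o 0 (by omega)
  have hρmem : ∀ i : Fin n, (L i o - L i z = ((k:ℕ):ZMod n) ∨
      L i o - L i z = ((k+1:ℕ):ZMod n)) := fun i => hrowstep i 0 (by omega)
  -- key relation
  have hkey : ∀ i, ∀ h : i < n, L ⟨i, h⟩ o - L ⟨i, h⟩ z
      = (L z o - L z z) + (i : ZMod n) * (c' - r) := by
    intro i h
    have h1 := hcol o i h
    have h2 := hcol z i h
    rw [h1, h2]; ring
  -- c' = r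
  have hcr : c' = r := by
    by_contra hne
    have hdval : c' - r = 1 ∨ c' - r = -1 := by
      rcases hc'mem with h1 | h1 <;> rcases hrmem with h2 | h2
      · exact absurd (h1.trans h2.symm) hne
      · right; rw [h1, h2]; push_cast; ring
      · left; rw [h1, h2]; push_cast; ring
      · exact absurd (h1.trans h2.symm) hne
    have h2 := hkey 2 (by omega)
    have hρ2 := hρmem ⟨2, by omega⟩
    have hρ0 := hρmem z
    have hdiff : L (⟨2, by omega⟩ : Fin n) o - L ⟨2, by omega⟩ z
        - (L z o - L z z) = 2 * (c' - r) := by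
      rw [h2]; push_cast; ring
    have h1ne : ((1:ℕ) : ZMod n) ≠ 0 := small_cast_ne hnk hk (by omega) (by omega)
    have h2ne : ((2:ℕ) : ZMod n) ≠ 0 := small_cast_ne hnk hk (by omega) (by omega)
    have h3ne : ((3:ℕ) : ZMod n) ≠ 0 := small_cast_ne hnk hk (by omega) (by omega)
    have hk1 : ((k+1:ℕ):ZMod n) = ((k:ℕ):ZMod n) + 1 := by push_cast; ring
    rcases hdval with hd1 | hd1 <;>
      rcases hρ2 with hp2 | hp2 <;> rcases hρ0 with hp0 | hp0
    · exact h2ne (by push_cast; linear_combination -hdiff - 2*hd1 + hp2 - hp0)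
    · exact h3ne (by push_cast; linear_combination -hdiff - 2*hd1 + hp2 - hp0 - hk1)
    · exact h1ne (by push_cast; linear_combination -hdiff - 2*hd1 + hp2 - hp0 + hk1)
    · exact h2ne (by push_cast; linear_combination -hdiff - 2*hd1 + hp2 - hp0)
    · exact h2ne (by push_cast; linear_combination hdiff + 2*hd1 - hp2 + hp0)
    · exact h1ne (by push_cast; linear_combination hdiff + 2*hd1 - hp2 + hp0 + hk1)
    · exact h3ne (by push_cast; linear_combination hdiff + 2*hd1 - hp2 + hp0 - hk1)
    · exact h2ne (by push_cast; linear_combination hdiff + 2*hd1 - hp2 + hp0)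
  -- ρ constant
  have hρconst : ∀ i : Fin n, L i o - L i z = L z o - L z z := by
    intro i
    have := hkey i.val i.isLt
    rw [hcr] at this
    simpa [Fin.eta] using this
  refine ⟨r, L z o - L z z, hrmem, hρmem z, ?_⟩
  intro i j
  have hr1 := hrow i j.val j.isLt
  have hc1 := hcol z i.val i.isLt
  have hρi := hρconst i
  have hiz : L i z = L z z + (i.val : ZMod n) * r := by
    have := hcol z i.val i.isLt
    simp only [Fin.eta] at this; exact this
  have : L i j = L i z + (j.val : ZMod n) * (L i o - L i z) := by
    simp only [Fin.eta] at hr1; exact hr1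
  linear_combination this + hiz + (j.val : ZMod n) * hρi

/-- The step value chosen by a boolean. -/
def stepVal (n k : ℕ) : Bool → ZMod n :=
  fun b => if b then ((k:ℕ):ZMod n) else ((k+1:ℕ):ZMod n)

/-- The circulant square determined by a starting value and two step choices. -/
def circ (n k : ℕ) (t : ZMod n × Bool × Bool) : Fin n → Fin n → ZMod n :=
  fun i j => t.1 + (i.val : ZMod n) * stepVal n k t.2.1 + (j.val : ZMod n) * stepVal n k t.2.2

lemma stepVal_mem (b : Bool) :
    stepVal n k b = ((k:ℕ):ZMod n) ∨ stepVal n k b = ((k+1:ℕ):ZMod n) := by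
  cases b <;> simp [stepVal]

lemma cast_k_ne (hnk : n = 2*k+1) (hk : 2 ≤ k) :
    ((k:ℕ):ZMod n) ≠ ((k+1:ℕ):ZMod n) := by
  intro h
  have h1 : ((1:ℕ) : ZMod n) = 0 := by push_cast at h ⊢; linear_combination -h
  exact small_cast_ne hnk hk (by omega) (by omega) h1

lemma stepVal_isUnit (hnk : n = 2*k+1) (hk : 2 ≤ k) (b : Bool) :
    IsUnit (stepVal n k b) := by
  haveI : NeZero n := ⟨by omega⟩
  have hck : Nat.Coprime k n := by
    rw [hnk, (by ring : 2*k+1 = 1 + k*2)]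
    simp [Nat.coprime_add_mul_right_right]
  have hck1 : Nat.Coprime (k+1) n := by
    rw [hnk, (by ring : 2*k+1 = k + (k+1)*1)]
    simp [Nat.coprime_add_mul_right_right, Nat.coprime_self_add_left]
  cases b
  · simpa [stepVal] using (ZMod.isUnit_iff_coprime (k+1) n).mpr hck1
  · simpa [stepVal] using (ZMod.isUnit_iff_coprime k n).mpr hck

lemma circ_latin (hnk : n = 2*k+1) (hk : 2 ≤ k) (t : ZMod n × Bool × Bool) :
    IsLatin n (circ n k t) := by
  haveI : NeZero n := ⟨by omega⟩
  have hcancel : ∀ (b : Bool) (x y : Fin n),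
      (x.val : ZMod n) * stepVal n k b = (y.val : ZMod n) * stepVal n k b → x = y := by
    intro b x y h
    have hu := stepVal_isUnit hnk hk b
    have : (x.val : ZMod n) = (y.val : ZMod n) := hu.mul_right_cancel h
    have := congrArg ZMod.val this
    rw [ZMod.val_cast_of_lt x.isLt, ZMod.val_cast_of_lt y.isLt] at this
    exact Fin.ext this
  constructor
  · intro i
    rw [Fintype.bijective_iff_injective_and_card]
    refine ⟨fun x y h => ?_, by simp [ZMod.card]⟩
    simp only [circ] at h
    exact hcancel t.2.2 x y (by linear_combination h)
  · intro j
    rw [Fintype.bijective_iff_injective_and_card]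
    refine ⟨fun x y h => ?_, by simp [ZMod.card]⟩
    simp only [circ] at h
    exact hcancel t.2.1 x y (by linear_combination h)

lemma circ_adist (hnk : n = 2*k+1) (hk : 2 ≤ k) (t : ZMod n × Bool × Bool) :
    ∀ p q : Fin n × Fin n, Adjacent p q →
      adist n (circ n k t p.1 p.2) (circ n k t q.1 q.2) = k := by
  intro p q hadj
  rcases hadj with ⟨h1, h2 | h2⟩ | ⟨h1, h2 | h2⟩
  · rw [adist_comm]
    apply adist_of_diff hnk hk
    have : circ n k t q.1 q.2 - circ n k t p.1 p.2 = stepVal n k t.2.2 := by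
      simp only [circ, h1, ← h2]; push_cast; ring
    rw [this]; exact stepVal_mem _
  · apply adist_of_diff hnk hk
    have : circ n k t p.1 p.2 - circ n k t q.1 q.2 = stepVal n k t.2.2 := by
      simp only [circ, h1, ← h2]; push_cast; ring
    rw [this]; exact stepVal_mem _
  · rw [adist_comm]
    apply adist_of_diff hnk hk
    have : circ n k t q.1 q.2 - circ n k t p.1 p.2 = stepVal n k t.2.1 := by
      simp only [circ, h1, ← h2]; push_cast; ring
    rw [this]; exact stepVal_mem _
  · apply adist_of_diff hnk hk
    have : circ n k t p.1 p.2 - circ n k t q.1 q.2 = stepVal n k t.2.1 := by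
      simp only [circ, h1, ← h2]; push_cast; ring
    rw [this]; exact stepVal_mem _

lemma circ_inner (hnk : n = 2*k+1) (hk : 2 ≤ k) (t : ZMod n × Bool × Bool) :
    innerDist n (circ n k t) = k := by
  unfold innerDist
  have hset : {d | ∃ p q : Fin n × Fin n, Adjacent p q ∧
      d = adist n (circ n k t p.1 p.2) (circ n k t q.1 q.2)} = {k} := by
    ext d
    simp only [Set.mem_setOf_eq, Set.mem_singleton_iff]
    constructor
    · rintro ⟨p, q, hadj, rfl⟩
      exact circ_adist hnk hk t p q hadj
    · intro hd
      have hadj : Adjacent ((⟨0, by omega⟩, ⟨0, by omega⟩) : Fin n × Fin n)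
          ((⟨0, by omega⟩, ⟨1, by omega⟩) : Fin n × Fin n) := Or.inl ⟨rfl, Or.inl rfl⟩
      exact ⟨_, _, hadj, hd.trans (circ_adist hnk hk t _ _ hadj).symm⟩
  rw [hset]
  exact csInf_singleton k

lemma circ_inj (hnk : n = 2*k+1) (hk : 2 ≤ k) :
    Function.Injective (circ n k) := by
  haveI : NeZero n := ⟨by omega⟩
  have hstepinj : ∀ b b' : Bool, stepVal n k b = stepVal n k b' → b = b' := by
    intro b b' h
    cases b <;> cases b'
    · rfl
    · exfalso; simp only [stepVal, Bool.false_eq_true, if_false, if_true] at h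
      exact cast_k_ne hnk hk h.symm
    · exfalso; simp only [stepVal, Bool.false_eq_true, if_false, if_true] at h
      exact cast_k_ne hnk hk h
    · rfl
  intro t t' h
  have h00 := congrFun (congrFun h ⟨0, by omega⟩) ⟨0, by omega⟩
  have h10 := congrFun (congrFun h ⟨1, by omega⟩) ⟨0, by omega⟩
  have h01 := congrFun (congrFun h ⟨0, by omega⟩) ⟨1, by omega⟩
  simp only [circ, Nat.cast_zero, Nat.cast_one, zero_mul, one_mul, add_zero] at h00 h10 h01
  have h1 : t.1 = t'.1 := by linear_combination h00
  have hb1 : t.2.1 = t'.2.1 := hstepinj _ _ (by linear_combination h10 - h00)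
  have hb2 : t.2.2 = t'.2.2 := hstepinj _ _ (by linear_combination h01 - h00)
  exact Prod.ext h1 (Prod.ext hb1 hb2)

end MaxInner

open MaxInner in
theorem count_max_inner_distance_squares (n : ℕ) (hn : 5 ≤ n) (hodd : Odd n) :
    {L : Fin n → Fin n → ZMod n |
        IsLatin n L ∧ innerDist n L = (n - 1) / 2}.ncard = 4 * n ∧
    ∀ L : Fin n → Fin n → ZMod n,
      IsLatin n L → innerDist n L = (n - 1) / 2 →
      ∃ r ∈ ({(n - 1) / 2, (n + 1) / 2} : Set ℕ),
      ∃ c ∈ ({(n - 1) / 2, (n + 1) / 2} : Set ℕ),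
      ∀ i j : Fin n,
        L i j = L ⟨0, by omega⟩ ⟨0, by omega⟩
          + ((i.val * r : ℕ) : ZMod n) + ((j.val * c : ℕ) : ZMod n) := by
  obtain ⟨k, hnk'⟩ := hodd
  have hnk : n = 2*k+1 := by omega
  have hk : 2 ≤ k := by omega
  haveI : NeZero n := ⟨by omega⟩
  have hkey : (n-1)/2 = k := by omega
  have hkey2 : (n+1)/2 = k+1 := by omega
  have hcastval : ∀ a : ZMod n, ((a.val : ℕ) : ZMod n) = a := fun a => by
    simp [ZMod.natCast_val, ZMod.cast_id]
  constructor
  · -- counting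
    have hSeq : {L : Fin n → Fin n → ZMod n |
        IsLatin n L ∧ innerDist n L = (n - 1) / 2} = Set.range (circ n k) := by
      ext L
      simp only [Set.mem_setOf_eq, Set.mem_range]
      constructor
      · rintro ⟨hLat, hInner⟩
        rw [hkey] at hInner
        obtain ⟨r, c, hr, hc, hform⟩ :=
          struct hnk hk hLat (inner_to_adist hnk hk hInner)
        have pick : ∀ x : ZMod n, (x = ((k:ℕ):ZMod n) ∨ x = ((k+1:ℕ):ZMod n)) →
            ∃ b : Bool, stepVal n k b = x := by
          rintro x (rfl | rfl)
          · exact ⟨true, rfl⟩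
          · exact ⟨false, rfl⟩
        obtain ⟨b1, hb1⟩ := pick r hr
        obtain ⟨b2, hb2⟩ := pick c hc
        refine ⟨(L ⟨0, by omega⟩ ⟨0, by omega⟩, b1, b2), ?_⟩
        funext i j
        rw [hform i j]
        simp only [circ, hb1, hb2]
      · rintro ⟨t, rfl⟩
        exact ⟨circ_latin hnk hk t, by rw [hkey]; exact circ_inner hnk hk t⟩
    rw [hSeq, ← Set.image_univ, Set.ncard_image_of_injective _ (circ_inj hnk hk),
      Set.ncard_univ]
    simp only [Nat.card_eq_fintype_card, Fintype.card_prod, Fintype.card_bool, ZMod.card]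
    ring
  · -- structure
    intro L hLat hInner
    rw [hkey] at hInner
    obtain ⟨r, c, hr, hc, hform⟩ := struct hnk hk hLat (inner_to_adist hnk hk hInner)
    have hrv : r.val = k ∨ r.val = k + 1 := by
      rcases hr with h | h <;> rw [h, ZMod.val_cast_of_lt (by omega)] <;> [left; right] <;> rfl
    have hcv : c.val = k ∨ c.val = k + 1 := by
      rcases hc with h | h <;> rw [h, ZMod.val_cast_of_lt (by omega)] <;> [left; right] <;> rfl
    refine ⟨r.val, ?_, c.val, ?_, ?_⟩
    · simp only [Set.mem_insert_iff, Set.mem_singleton_iff]; omega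
    · simp only [Set.mem_insert_iff, Set.mem_singleton_iff]; omega
    · intro i j
      rw [hform i j]
      push_cast
      rw [hcastval r, hcastval c]
end

section
/- Let n ≥ 5 with gcd(n, 6) = 1. Then the array defined by m(i,j) = (1 + (i-1)*(n-1)/2 - (j-1)*(n-3)/2) mod n is a pandiagonal Latin square of order n (every row, column, forward diagonal, and back diagonal contains each residue exactly once) with inner distance (n-3)/2. -/
/-- A pandiagonal Latin square: every row, column, (broken) forward diagonal
(`i - j` constant mod `n`) and back diagonal (`i + j` constant mod `n`)
contains each symbol exactly once. -/
def IsPandiagonal (n : ℕ) (L : Fin n → Fin n → ZMod n) : Prop :=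
  IsLatin n L ∧
  (∀ i₁ j₁ i₂ j₂ : Fin n,
    (i₁.val : ZMod n) - (j₁.val : ZMod n) = (i₂.val : ZMod n) - (j₂.val : ZMod n) →
    L i₁ j₁ = L i₂ j₂ → i₁ = i₂ ∧ j₁ = j₂) ∧
  (∀ i₁ j₁ i₂ j₂ : Fin n,
    (i₁.val : ZMod n) + (j₁.val : ZMod n) = (i₂.val : ZMod n) + (j₂.val : ZMod n) →
    L i₁ j₁ = L i₂ j₂ → i₁ = i₂ ∧ j₁ = j₂)

theorem pandiagonal_construction (n : ℕ) (hn : 5 ≤ n) (h6 : Nat.gcd n 6 = 1)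
    (L : Fin n → Fin n → ZMod n)
    (hL : L = fun i j : Fin n =>
      1 + (i.val : ZMod n) * (((n - 1) / 2 : ℕ) : ZMod n)
        - (j.val : ZMod n) * (((n - 3) / 2 : ℕ) : ZMod n)) :
    IsPandiagonal n L ∧ innerDist n L = (n - 3) / 2 := by
  have hnz : NeZero n := ⟨by omega⟩
  -- parity
  have h2d : ¬ (2 ∣ n) := by
    intro h
    have : (2:ℕ) ∣ Nat.gcd n 6 := Nat.dvd_gcd h (by norm_num)
    omega
  obtain ⟨k, hk⟩ : ∃ k, n = 2*k+5 := ⟨(n-5)/2, by omega⟩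
  have e1 : (n-1)/2 = k+2 := by omega
  have e2 : (n-3)/2 = k+1 := by omega
  have h0 : ((2*k+5 : ℕ) : ZMod n) = 0 := by rw [← hk]; exact ZMod.natCast_self n
  push_cast at h0
  -- convenient form of L
  have hL' : ∀ i j : Fin n, L i j =
      1 + (i.val : ZMod n) * ((k:ZMod n)+2) - (j.val : ZMod n) * ((k:ZMod n)+1) := by
    intro i j
    rw [hL]
    simp only [e1, e2]
    push_cast
    ring
  -- units
  have hcop3 : Nat.Coprime 3 n := (Nat.Coprime.coprime_dvd_right (by norm_num) h6).symm
  have hu3 : IsUnit (3 : ZMod n) := by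
    have := (ZMod.isUnit_iff_coprime 3 n).mpr hcop3
    simpa using this
  obtain ⟨c, hc⟩ := hu3.exists_right_inv
  have hua : IsUnit ((k:ZMod n)+2) :=
    IsUnit.of_mul_eq_one (-2) (by linear_combination -h0)
  have hub : IsUnit ((k:ZMod n)+1) :=
    IsUnit.of_mul_eq_one (-2*c) (by linear_combination -c*h0 + hc)
  have hu2 : IsUnit (2 : ZMod n) :=
    IsUnit.of_mul_eq_one (-((k:ZMod n)+2)) (by linear_combination -h0)
  -- Fin injectivity from cast equality
  have finj : ∀ j₁ j₂ : Fin n, ((j₁.val : ℕ) : ZMod n) = ((j₂.val : ℕ) : ZMod n) → j₁ = j₂ := by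
    intro j₁ j₂ h
    have := congrArg ZMod.val h
    rw [ZMod.val_cast_of_lt j₁.isLt, ZMod.val_cast_of_lt j₂.isLt] at this
    exact Fin.ext this
  -- adist computations
  have hdb : ∀ u v : ZMod n, u - v = (k:ZMod n)+1 → adist n u v = k+1 := by
    intro u v h
    have h2 : v - u = -(((k+1:ℕ)) : ZMod n) := by push_cast; linear_combination -h
    have h1 : u - v = (((k+1:ℕ)) : ZMod n) := by push_cast; linear_combination h
    have hvlt : ((k+1:ℕ) : ZMod n).val = k+1 := ZMod.val_cast_of_lt (by omega)
    have hne : ((k+1:ℕ) : ZMod n) ≠ 0 := by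
      intro hz; rw [hz] at hvlt; simp at hvlt
    rw [adist, h1, h2, ZMod.neg_val, if_neg hne, hvlt]
    omega
  have hda : ∀ u v : ZMod n, u - v = (k:ZMod n)+2 → adist n u v = k+2 := by
    intro u v h
    have h2 : v - u = -(((k+2:ℕ)) : ZMod n) := by push_cast; linear_combination -h
    have h1 : u - v = (((k+2:ℕ)) : ZMod n) := by push_cast; linear_combination h
    have hvlt : ((k+2:ℕ) : ZMod n).val = k+2 := ZMod.val_cast_of_lt (by omega)
    have hne : ((k+2:ℕ) : ZMod n) ≠ 0 := by
      intro hz; rw [hz] at hvlt; simp at hvlt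
    rw [adist, h1, h2, ZMod.neg_val, if_neg hne, hvlt]
    omega
  have hsymm : ∀ u v : ZMod n, adist n u v = adist n v u := by
    intro u v; rw [adist, adist, min_comm]
  constructor
  · refine ⟨⟨?_, ?_⟩, ?_, ?_⟩
    · intro i
      rw [Fintype.bijective_iff_injective_and_card]
      refine ⟨?_, by simp [ZMod.card]⟩
      intro j₁ j₂ h
      simp only [hL'] at h
      refine finj _ _ (hub.mul_left_cancel ?_)
      linear_combination -h
    · intro j
      rw [Fintype.bijective_iff_injective_and_card]
      refine ⟨?_, by simp [ZMod.card]⟩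
      intro i₁ i₂ h
      simp only [hL'] at h
      refine finj _ _ (hua.mul_left_cancel ?_)
      linear_combination h
    · intro i₁ j₁ i₂ j₂ hd heq
      rw [hL' i₁ j₁, hL' i₂ j₂] at heq
      have hi : ((i₁.val : ℕ) : ZMod n) = ((i₂.val : ℕ) : ZMod n) := by
        linear_combination heq - ((k:ZMod n)+1)*hd
      have hi' := finj _ _ hi
      refine ⟨hi', finj _ _ ?_⟩
      rw [hi] at hd
      linear_combination -hd
    · intro i₁ j₁ i₂ j₂ hd heq
      rw [hL' i₁ j₁, hL' i₂ j₂] at heq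
      have hi : ((i₁.val : ℕ) : ZMod n) = ((i₂.val : ℕ) : ZMod n) := by
        refine hu2.mul_left_cancel ?_
        linear_combination ((i₁.val:ZMod n) - (i₂.val:ZMod n))*h0 - heq - ((k:ZMod n)+1)*hd
      have hi' := finj _ _ hi
      refine ⟨hi', finj _ _ ?_⟩
      rw [hi] at hd
      linear_combination hd
  · rw [innerDist, e2]
    have hmem : (k+1) ∈ {d | ∃ p q : Fin n × Fin n,
        Adjacent p q ∧ d = adist n (L p.1 p.2) (L q.1 q.2)} := by
      refine ⟨(⟨0, by omega⟩, ⟨0, by omega⟩), (⟨0, by omega⟩, ⟨1, by omega⟩),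
        Or.inl ⟨rfl, Or.inl rfl⟩, ?_⟩
      refine (hdb _ _ ?_).symm
      rw [hL', hL']
      push_cast
      ring
    refine le_antisymm (Nat.sInf_le hmem) (le_csInf ⟨_, hmem⟩ ?_)
    rintro d ⟨p, q, hadj, rfl⟩
    rcases hadj with ⟨h1, h2 | h2⟩ | ⟨h1, h2 | h2⟩
    · have : L p.1 p.2 - L q.1 q.2 = (k:ZMod n)+1 := by
        rw [hL', hL', h1]
        have hc2 : ((q.2.val : ℕ) : ZMod n) = ((p.2.val : ℕ) : ZMod n) + 1 := by
          rw [← h2]; push_cast; ring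
        linear_combination ((k:ZMod n)+1)*hc2
      rw [hdb _ _ this]
    · rw [hsymm]
      have : L q.1 q.2 - L p.1 p.2 = (k:ZMod n)+1 := by
        rw [hL', hL', h1]
        have hc2 : ((p.2.val : ℕ) : ZMod n) = ((q.2.val : ℕ) : ZMod n) + 1 := by
          rw [← h2]; push_cast; ring
        linear_combination ((k:ZMod n)+1)*hc2
      rw [hdb _ _ this]
    · rw [hsymm]
      have : L q.1 q.2 - L p.1 p.2 = (k:ZMod n)+2 := by
        rw [hL', hL', h1]
        have hc2 : ((q.1.val : ℕ) : ZMod n) = ((p.1.val : ℕ) : ZMod n) + 1 := by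
          rw [← h2]; push_cast; ring
        linear_combination ((k:ZMod n)+2)*hc2
      rw [hda _ _ this]
      omega
    · have : L p.1 p.2 - L q.1 q.2 = (k:ZMod n)+2 := by
        rw [hL', hL', h1]
        have hc2 : ((p.1.val : ℕ) : ZMod n) = ((q.1.val : ℕ) : ZMod n) + 1 := by
          rw [← h2]; push_cast; ring
        linear_combination ((k:ZMod n)+2)*hc2
      rw [hda _ _ this]
      omega
end

section
/- Let n ≥ 5 be odd. No circulant Latin square of the form m(i,j) = (s + (i-1)*r + (j-1)*c) mod n with |r| = |c| = (n-1)/2 (mod n, up to sign) is pandiagonal; consequently no pandiagonal Latin square of order n has inner distance (n-1)/2, so for n ≡ 1, 5 (mod 6) the maximum inner distance over pandiagonal Latin squares of order n is at most (n-3)/2. -/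
lemma adist_le_half (n : ℕ) (hn : 5 ≤ n) (hodd : Odd n) (u v : ZMod n) :
    adist n u v ≤ (n - 1) / 2 := by
  have : NeZero n := ⟨by omega⟩
  by_cases h : u = v
  · subst h; simp [adist]
  · have h1 : u - v ≠ 0 := sub_ne_zero.mpr h
    have h2 : v - u = -(u - v) := by ring
    have h3 : (u - v).val ≠ 0 := by simpa [ZMod.val_eq_zero] using h1
    have h4 : (-(u - v)).val = n - (u - v).val := by
      rw [ZMod.neg_val]; simp [h1]
    have h5 : (u - v).val < n := ZMod.val_lt _
    unfold adist
    rw [h2, h4]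
    obtain ⟨m, hm⟩ := hodd
    omega

lemma adist_eq_half (n : ℕ) (hn : 5 ≤ n) (hodd : Odd n) (u v : ZMod n)
    (h : adist n u v = (n - 1) / 2) :
    u - v = (((n - 1) / 2 : ℕ) : ZMod n) ∨ u - v = -(((n - 1) / 2 : ℕ) : ZMod n) := by
  have : NeZero n := ⟨by omega⟩
  have hlt : (n - 1) / 2 < n := by omega
  have hv : (((n - 1) / 2 : ℕ) : ZMod n).val = (n - 1) / 2 := ZMod.val_cast_of_lt hlt
  unfold adist at h
  have hcase : (u - v).val = (n - 1) / 2 ∨ (v - u).val = (n - 1) / 2 := by omega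
  rcases hcase with hc | hc
  · left
    apply ZMod.val_injective
    rw [hv, hc]
  · right
    have : v - u = (((n - 1) / 2 : ℕ) : ZMod n) := by
      apply ZMod.val_injective
      rw [hv, hc]
    rw [← this]; ring

theorem pandiagonal_upper_bound (n : ℕ) (hn : 5 ≤ n) (hodd : Odd n) :
    (∀ s r c : ZMod n,
      (r = (((n - 1) / 2 : ℕ) : ZMod n) ∨ r = -(((n - 1) / 2 : ℕ) : ZMod n)) →
      (c = (((n - 1) / 2 : ℕ) : ZMod n) ∨ c = -(((n - 1) / 2 : ℕ) : ZMod n)) →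
      ¬ IsPandiagonal n (fun i j : Fin n => s + (i.val : ZMod n) * r + (j.val : ZMod n) * c)) ∧
    (∀ L : Fin n → Fin n → ZMod n, IsPandiagonal n L → innerDist n L ≠ (n - 1) / 2) ∧
    (Nat.gcd n 6 = 1 →
      ∀ L : Fin n → Fin n → ZMod n, IsPandiagonal n L → innerDist n L ≤ (n - 3) / 2) := by
  have hNZ : NeZero n := ⟨by omega⟩
  have h0 : (0 : ℕ) < n := by omega
  have h1 : (1 : ℕ) < n := by omega
  have hfin01 : (⟨0, h0⟩ : Fin n) ≠ ⟨1, h1⟩ := by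
    intro h
    have := congrArg Fin.val h
    simp at this
  -- Part 1
  have P1 : ∀ s r c : ZMod n,
      (r = (((n - 1) / 2 : ℕ) : ZMod n) ∨ r = -(((n - 1) / 2 : ℕ) : ZMod n)) →
      (c = (((n - 1) / 2 : ℕ) : ZMod n) ∨ c = -(((n - 1) / 2 : ℕ) : ZMod n)) →
      ¬ IsPandiagonal n (fun i j : Fin n => s + (i.val : ZMod n) * r + (j.val : ZMod n) * c) := by
    rintro s r c hr hc ⟨hlat, hfwd, hback⟩
    rcases hr with hr | hr <;> rcases hc with hc | hc
    · -- r = k, c = k : back diagonal (0,1) and (1,0)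
      have := hback ⟨0, h0⟩ ⟨1, h1⟩ ⟨1, h1⟩ ⟨0, h0⟩
        (by show ((0 : ℕ) : ZMod n) + ((1 : ℕ) : ZMod n) = ((1 : ℕ) : ZMod n) + ((0 : ℕ) : ZMod n); push_cast; ring)
        (by show s + ((0 : ℕ) : ZMod n) * r + ((1 : ℕ) : ZMod n) * c
              = s + ((1 : ℕ) : ZMod n) * r + ((0 : ℕ) : ZMod n) * c
            rw [hr, hc]; push_cast; ring)
      exact hfin01 this.1
    · -- r = k, c = -k : forward diagonal (0,0) and (1,1)
      have := hfwd ⟨0, h0⟩ ⟨0, h0⟩ ⟨1, h1⟩ ⟨1, h1⟩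
        (by show ((0 : ℕ) : ZMod n) - ((0 : ℕ) : ZMod n) = ((1 : ℕ) : ZMod n) - ((1 : ℕ) : ZMod n); push_cast; ring)
        (by show s + ((0 : ℕ) : ZMod n) * r + ((0 : ℕ) : ZMod n) * c
              = s + ((1 : ℕ) : ZMod n) * r + ((1 : ℕ) : ZMod n) * c
            rw [hr, hc]; push_cast; ring)
      exact hfin01 this.1
    · -- r = -k, c = k : forward diagonal
      have := hfwd ⟨0, h0⟩ ⟨0, h0⟩ ⟨1, h1⟩ ⟨1, h1⟩
        (by show ((0 : ℕ) : ZMod n) - ((0 : ℕ) : ZMod n) = ((1 : ℕ) : ZMod n) - ((1 : ℕ) : ZMod n); push_cast; ring)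
        (by show s + ((0 : ℕ) : ZMod n) * r + ((0 : ℕ) : ZMod n) * c
              = s + ((1 : ℕ) : ZMod n) * r + ((1 : ℕ) : ZMod n) * c
            rw [hr, hc]; push_cast; ring)
      exact hfin01 this.1
    · -- r = -k, c = -k : back diagonal
      have := hback ⟨0, h0⟩ ⟨1, h1⟩ ⟨1, h1⟩ ⟨0, h0⟩
        (by show ((0 : ℕ) : ZMod n) + ((1 : ℕ) : ZMod n) = ((1 : ℕ) : ZMod n) + ((0 : ℕ) : ZMod n); push_cast; ring)
        (by show s + ((0 : ℕ) : ZMod n) * r + ((1 : ℕ) : ZMod n) * c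
              = s + ((1 : ℕ) : ZMod n) * r + ((0 : ℕ) : ZMod n) * c
            rw [hr, hc]; push_cast; ring)
      exact hfin01 this.1
  -- Part 2
  have P2 : ∀ L : Fin n → Fin n → ZMod n, IsPandiagonal n L → innerDist n L ≠ (n - 1) / 2 := by
    rintro L ⟨hlat, hfwd, hback⟩ hd
    set κ : ZMod n := (((n - 1) / 2 : ℕ) : ZMod n) with hκ
    have hstep : ∀ p q : Fin n × Fin n, Adjacent p q →
        L q.1 q.2 - L p.1 p.2 = κ ∨ L q.1 q.2 - L p.1 p.2 = -κ := by
      intro p q hpq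
      have hmem : adist n (L p.1 p.2) (L q.1 q.2) ∈
          {d | ∃ p q : Fin n × Fin n, Adjacent p q ∧ d = adist n (L p.1 p.2) (L q.1 q.2)} :=
        ⟨p, q, hpq, rfl⟩
      have hle : innerDist n L ≤ adist n (L p.1 p.2) (L q.1 q.2) := Nat.sInf_le hmem
      rw [hd] at hle
      have hge := adist_le_half n hn hodd (L p.1 p.2) (L q.1 q.2)
      have heq : adist n (L q.1 q.2) (L p.1 p.2) = (n - 1) / 2 := by
        unfold adist at *
        omega
      exact adist_eq_half n hn hodd _ _ heq
    have hadj1 : Adjacent ((⟨0, h0⟩ : Fin n), (⟨0, h0⟩ : Fin n)) ((⟨0, h0⟩ : Fin n), (⟨1, h1⟩ : Fin n)) :=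
      Or.inl ⟨rfl, Or.inl rfl⟩
    have hadj2 : Adjacent ((⟨0, h0⟩ : Fin n), (⟨0, h0⟩ : Fin n)) ((⟨1, h1⟩ : Fin n), (⟨0, h0⟩ : Fin n)) :=
      Or.inr ⟨rfl, Or.inl rfl⟩
    have hadj3 : Adjacent ((⟨1, h1⟩ : Fin n), (⟨0, h0⟩ : Fin n)) ((⟨1, h1⟩ : Fin n), (⟨1, h1⟩ : Fin n)) :=
      Or.inl ⟨rfl, Or.inl rfl⟩
    have hadj4 : Adjacent ((⟨0, h0⟩ : Fin n), (⟨1, h1⟩ : Fin n)) ((⟨1, h1⟩ : Fin n), (⟨1, h1⟩ : Fin n)) :=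
      Or.inr ⟨rfl, Or.inl rfl⟩
    have h1' := hstep _ _ hadj1
    have h2' := hstep _ _ hadj2
    have h3' := hstep _ _ hadj3
    have h4' := hstep _ _ hadj4
    simp only at h1' h2' h3' h4'
    have hne : L ⟨0, h0⟩ ⟨1, h1⟩ ≠ L ⟨1, h1⟩ ⟨0, h0⟩ := by
      intro h
      have := hback ⟨0, h0⟩ ⟨1, h1⟩ ⟨1, h1⟩ ⟨0, h0⟩
        (by show ((0 : ℕ) : ZMod n) + ((1 : ℕ) : ZMod n) = ((1 : ℕ) : ZMod n) + ((0 : ℕ) : ZMod n); push_cast; ring)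
        h
      exact hfin01 this.1
    have hDA : L ⟨1, h1⟩ ⟨1, h1⟩ ≠ L ⟨0, h0⟩ ⟨0, h0⟩ := by
      intro h
      have := hfwd ⟨1, h1⟩ ⟨1, h1⟩ ⟨0, h0⟩ ⟨0, h0⟩
        (by show ((1 : ℕ) : ZMod n) - ((1 : ℕ) : ZMod n) = ((0 : ℕ) : ZMod n) - ((0 : ℕ) : ZMod n); push_cast; ring)
        h
      exact hfin01 this.1.symm
    have hsum : κ + κ = -1 := by
      rw [hκ, ← Nat.cast_add]
      have e1 : (n - 1) / 2 + (n - 1) / 2 = n - 1 := by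
        obtain ⟨m, hm⟩ := hodd; omega
      rw [e1, Nat.cast_sub (by omega : 1 ≤ n), ZMod.natCast_self]
      ring
    have h1ne : (1 : ZMod n) ≠ 0 := by
      intro h
      have : (n : ℕ) ∣ 1 := by
        have := (ZMod.natCast_eq_zero_iff 1 n).mp (by exact_mod_cast h)
        exact this
      have := Nat.le_of_dvd (by norm_num) this
      omega
    have h2ne : (2 : ZMod n) ≠ 0 := by
      intro h
      have : (n : ℕ) ∣ 2 := by
        have := (ZMod.natCast_eq_zero_iff 2 n).mp (by exact_mod_cast h)
        exact this
      have := Nat.le_of_dvd (by norm_num) this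
      omega
    rcases h1' with h1' | h1' <;> rcases h2' with h2' | h2' <;>
      rcases h3' with h3' | h3' <;> rcases h4' with h4' | h4' <;>
      first
        | exact hne (by linear_combination h1' - h2')
        | exact hDA (by linear_combination h3' + h2')
        | exact h1ne (by linear_combination h1' + h4' - h2' - h3' + hsum)
        | exact h1ne (by linear_combination -h1' - h4' + h2' + h3' + hsum)
        | exact h2ne (by linear_combination h1' + h4' - h2' - h3' + 2 * hsum)
        | exact h2ne (by linear_combination -h1' - h4' + h2' + h3' + 2 * hsum)
  refine ⟨P1, P2, ?_⟩
  intro _ L hL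
  have hne := P2 L hL
  have hadj1 : Adjacent ((⟨0, h0⟩ : Fin n), (⟨0, h0⟩ : Fin n)) ((⟨0, h0⟩ : Fin n), (⟨1, h1⟩ : Fin n)) :=
    Or.inl ⟨rfl, Or.inl rfl⟩
  have hmem : adist n (L ⟨0, h0⟩ ⟨0, h0⟩) (L ⟨0, h0⟩ ⟨1, h1⟩) ∈
      {d | ∃ p q : Fin n × Fin n, Adjacent p q ∧ d = adist n (L p.1 p.2) (L q.1 q.2)} :=
    ⟨_, _, hadj1, rfl⟩
  have hle : innerDist n L ≤ adist n (L ⟨0, h0⟩ ⟨0, h0⟩) (L ⟨0, h0⟩ ⟨1, h1⟩) := Nat.sInf_le hmem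
  have hge := adist_le_half n hn hodd (L ⟨0, h0⟩ ⟨0, h0⟩) (L ⟨0, h0⟩ ⟨1, h1⟩)
  obtain ⟨m, hm⟩ := hodd
  omega
end

section
/- Let a, b ≥ 3 and n = ab. Then every (a,b)-Sudoku Latin square of order n has inner distance at most ⌊(n-3)/2⌋. -/
/-- An `(a,b)`-Sudoku Latin square of order `n = a*b`: a Latin square in which
each `a × b` block (a band of `a` consecutive rows meets a stack of `b`
consecutive columns) contains every symbol exactly once. -/
def IsSudoku (n a b : ℕ) (L : Fin n → Fin n → ZMod n) : Prop :=
  IsLatin n L ∧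
  ∀ i₁ j₁ i₂ j₂ : Fin n, i₁.val / a = i₂.val / a → j₁.val / b = j₂.val / b →
    L i₁ j₁ = L i₂ j₂ → i₁ = i₂ ∧ j₁ = j₂

theorem sudoku_upper_bound (n a b : ℕ) (ha : 3 ≤ a) (hb : 3 ≤ b) (hn : n = a * b)
    (L : Fin n → Fin n → ZMod n) (hL : IsSudoku n a b L) :
    innerDist n L ≤ (n - 3) / 2 := by
  by_contra hcon
  push_neg at hcon
  have hn9 : 9 ≤ n := by subst hn; nlinarith
  haveI : NeZero n := ⟨by omega⟩
  have hadj : ∀ p q : Fin n × Fin n, Adjacent p q →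
      (n - 3) / 2 < adist n (L p.1 p.2) (L q.1 q.2) := by
    intro p q h
    exact lt_of_lt_of_le hcon (Nat.sInf_le ⟨p, q, h, rfl⟩)
  have h0 : (0 : ℕ) < n := by omega
  have h1 : (1 : ℕ) < n := by omega
  have h2 : (2 : ℕ) < n := by omega
  -- Sudoku block distinctness for the top-left 3×3 corner
  have key : ∀ (i₁ j₁ i₂ j₂ : Fin n), i₁.val < 3 → j₁.val < 3 → i₂.val < 3 → j₂.val < 3 →
      L i₁ j₁ = L i₂ j₂ → i₁.val = i₂.val ∧ j₁.val = j₂.val := by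
    intro i₁ j₁ i₂ j₂ hi1 hj1 hi2 hj2 heq
    have := hL.2 i₁ j₁ i₂ j₂
      (by rw [Nat.div_eq_of_lt (by omega), Nat.div_eq_of_lt (by omega)])
      (by rw [Nat.div_eq_of_lt (by omega), Nat.div_eq_of_lt (by omega)]) heq
    exact ⟨congrArg Fin.val this.1, congrArg Fin.val this.2⟩
  have hsum : ∀ u w : ZMod n, u ≠ w → (u - w).val + (w - u).val = n := by
    intro u w h
    have h0' : u - w ≠ 0 := sub_ne_zero.mpr h
    have hrw : w - u = -(u - w) := by ring
    have hlt : (u - w).val < n := ZMod.val_lt _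
    have hne0 : (u - w).val ≠ 0 := fun hh => h0' ((ZMod.val_eq_zero (u - w)).mp hh)
    rw [hrw, ZMod.neg_val, if_neg h0']
    omega
  set v := L ⟨1, h1⟩ ⟨1, h1⟩ with hv
  set u1 := L ⟨0, h0⟩ ⟨1, h1⟩ with hu1
  set u2 := L ⟨2, h2⟩ ⟨1, h1⟩ with hu2
  set u3 := L ⟨1, h1⟩ ⟨0, h0⟩ with hu3
  set u4 := L ⟨1, h1⟩ ⟨2, h2⟩ with hu4
  have A1 := hadj (⟨0, h0⟩, ⟨1, h1⟩) (⟨1, h1⟩, ⟨1, h1⟩) (Or.inr ⟨rfl, Or.inl rfl⟩)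
  have A2 := hadj (⟨2, h2⟩, ⟨1, h1⟩) (⟨1, h1⟩, ⟨1, h1⟩) (Or.inr ⟨rfl, Or.inr rfl⟩)
  have A3 := hadj (⟨1, h1⟩, ⟨0, h0⟩) (⟨1, h1⟩, ⟨1, h1⟩) (Or.inl ⟨rfl, Or.inl rfl⟩)
  have A4 := hadj (⟨1, h1⟩, ⟨2, h2⟩) (⟨1, h1⟩, ⟨1, h1⟩) (Or.inl ⟨rfl, Or.inr rfl⟩)
  simp only [adist, lt_min_iff] at A1 A2 A3 A4
  rw [← hv, ← hu1] at A1
  rw [← hv, ← hu2] at A2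
  rw [← hv, ← hu3] at A3
  rw [← hv, ← hu4] at A4
  -- distinctness of the five entries
  have ne1v : u1 ≠ v := fun h => by
    have := (key _ _ _ _ (show (0:ℕ) < 3 by norm_num) (show (1:ℕ) < 3 by norm_num)
      (show (1:ℕ) < 3 by norm_num) (show (1:ℕ) < 3 by norm_num) h).1
    exact absurd this (by norm_num)
  have ne2v : u2 ≠ v := fun h => by
    have := (key _ _ _ _ (show (2:ℕ) < 3 by norm_num) (show (1:ℕ) < 3 by norm_num)
      (show (1:ℕ) < 3 by norm_num) (show (1:ℕ) < 3 by norm_num) h).1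
    exact absurd this (by norm_num)
  have ne3v : u3 ≠ v := fun h => by
    have := (key _ _ _ _ (show (1:ℕ) < 3 by norm_num) (show (0:ℕ) < 3 by norm_num)
      (show (1:ℕ) < 3 by norm_num) (show (1:ℕ) < 3 by norm_num) h).2
    exact absurd this (by norm_num)
  have ne4v : u4 ≠ v := fun h => by
    have := (key _ _ _ _ (show (1:ℕ) < 3 by norm_num) (show (2:ℕ) < 3 by norm_num)
      (show (1:ℕ) < 3 by norm_num) (show (1:ℕ) < 3 by norm_num) h).2
    exact absurd this (by norm_num)
  have ne12 : u1 ≠ u2 := fun h => by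
    have := (key _ _ _ _ (show (0:ℕ) < 3 by norm_num) (show (1:ℕ) < 3 by norm_num)
      (show (2:ℕ) < 3 by norm_num) (show (1:ℕ) < 3 by norm_num) h).1
    exact absurd this (by norm_num)
  have ne13 : u1 ≠ u3 := fun h => by
    have := (key _ _ _ _ (show (0:ℕ) < 3 by norm_num) (show (1:ℕ) < 3 by norm_num)
      (show (1:ℕ) < 3 by norm_num) (show (0:ℕ) < 3 by norm_num) h).1
    exact absurd this (by norm_num)
  have ne14 : u1 ≠ u4 := fun h => by
    have := (key _ _ _ _ (show (0:ℕ) < 3 by norm_num) (show (1:ℕ) < 3 by norm_num)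
      (show (1:ℕ) < 3 by norm_num) (show (2:ℕ) < 3 by norm_num) h).1
    exact absurd this (by norm_num)
  have ne23 : u2 ≠ u3 := fun h => by
    have := (key _ _ _ _ (show (2:ℕ) < 3 by norm_num) (show (1:ℕ) < 3 by norm_num)
      (show (1:ℕ) < 3 by norm_num) (show (0:ℕ) < 3 by norm_num) h).1
    exact absurd this (by norm_num)
  have ne24 : u2 ≠ u4 := fun h => by
    have := (key _ _ _ _ (show (2:ℕ) < 3 by norm_num) (show (1:ℕ) < 3 by norm_num)
      (show (1:ℕ) < 3 by norm_num) (show (2:ℕ) < 3 by norm_num) h).1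
    exact absurd this (by norm_num)
  have ne34 : u3 ≠ u4 := fun h => by
    have := (key _ _ _ _ (show (1:ℕ) < 3 by norm_num) (show (0:ℕ) < 3 by norm_num)
      (show (1:ℕ) < 3 by norm_num) (show (2:ℕ) < 3 by norm_num) h).2
    exact absurd this (by norm_num)
  -- the four differences
  have S1 := hsum u1 v ne1v
  have S2 := hsum u2 v ne2v
  have S3 := hsum u3 v ne3v
  have S4 := hsum u4 v ne4v
  have vinj : ∀ x y : ZMod n, (x - v).val = (y - v).val → x = y := by
    intro x y h
    have : x - v = y - v := ZMod.val_injective n h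
    exact sub_left_injective this
  have w12 : (u1 - v).val ≠ (u2 - v).val := fun h => ne12 (vinj _ _ h)
  have w13 : (u1 - v).val ≠ (u3 - v).val := fun h => ne13 (vinj _ _ h)
  have w14 : (u1 - v).val ≠ (u4 - v).val := fun h => ne14 (vinj _ _ h)
  have w23 : (u2 - v).val ≠ (u3 - v).val := fun h => ne23 (vinj _ _ h)
  have w24 : (u2 - v).val ≠ (u4 - v).val := fun h => ne24 (vinj _ _ h)
  have w34 : (u3 - v).val ≠ (u4 - v).val := fun h => ne34 (vinj _ _ h)
  omega
end

section
/- Let a, b be odd with 5 ≤ a ≤ b and n = ab. Then every (a,b)-Sudoku Latin square of order n has inner distance at most (n-5)/2; combined with the construction for odd b, the maximum inner distance over (5,b)-Sudoku Latin squares for odd b ≥ 5 equals (5b-5)/2. -/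
/-! ### Finite search core: no 5×5 integer grid with steps ±1, ±3 and distinct entries -/

def Dlist : List ℤ := [1,-1,3,-3]
def cands (l : List ℤ) : List ℤ :=
  let k := l.length
  let fromLeft : List ℤ := Dlist.map (fun d => l.getD (k-1) 0 + d)
  let fromUp : List ℤ := Dlist.map (fun d => l.getD (k-5) 0 + d)
  let base := if k = 0 then [0] else if k < 5 then fromLeft
    else if k % 5 = 0 then fromUp else fromLeft.filter (· ∈ fromUp)
  base.filter (fun v => ¬ v ∈ l)
def comps : ℕ → List ℤ → List (List ℤ)
| 0, l => [l]
| (m+1), l => (cands l).flatMap fun v => comps m (l ++ [v])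
theorem comps_empty : comps 25 [] = [] := by decide

section
variable (g : ℕ → ℤ)

lemma getD_range_map {t k : ℕ} (h : t < k) : ((List.range k).map g).getD t 0 = g t := by
  rw [List.getD_eq_getElem (hn := by simpa using h)]
  simp

variable (hg0 : g 0 = 0)
  (hinj : ∀ s t, s < 25 → t < 25 → g s = g t → s = t)
  (hH : ∀ k, 1 ≤ k → k < 25 → k % 5 ≠ 0 → g k - g (k-1) ∈ Dlist)
  (hV : ∀ k, 5 ≤ k → k < 25 → g k - g (k-5) ∈ Dlist)

include hg0 hinj hH hV in
lemma cand_mem : ∀ k, k < 25 → g k ∈ cands ((List.range k).map g) := by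
  intro k hk
  have hlen : ((List.range k).map g).length = k := by simp
  rw [cands, List.mem_filter]
  constructor
  · simp only [hlen]
    have hleft : k ≥ 1 → k % 5 ≠ 0 →
        g k ∈ Dlist.map (fun d => ((List.range k).map g).getD (k-1) 0 + d) := by
      intro h1 h2
      rw [getD_range_map g (by omega)]
      refine List.mem_map.2 ⟨g k - g (k-1), hH k h1 hk h2, by ring⟩
    have hup : k ≥ 5 →
        g k ∈ Dlist.map (fun d => ((List.range k).map g).getD (k-5) 0 + d) := by
      intro h5
      rw [getD_range_map g (by omega)]
      refine List.mem_map.2 ⟨g k - g (k-5), hV k h5 hk, by ring⟩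
    by_cases h0 : k = 0
    · simp [h0, hg0]
    · rw [if_neg h0]
      by_cases h5 : k < 5
      · rw [if_pos h5]; exact hleft (by omega) (by omega)
      · rw [if_neg h5]
        by_cases hm : k % 5 = 0
        · rw [if_pos hm]; exact hup (by omega)
        · rw [if_neg hm]
          exact List.mem_filter.2 ⟨hleft (by omega) hm, by
            simpa using hup (by omega)⟩
  · simp only [decide_eq_true_eq, List.mem_map, List.mem_range]
    rintro ⟨t, ht, hgt⟩
    exact absurd (hinj t k (by omega) hk hgt) (by omega)

include hg0 hinj hH hV in
lemma comps_complete : ∀ m k, k + m = 25 →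
    (List.range 25).map g ∈ comps m ((List.range k).map g) := by
  intro m
  induction m with
  | zero => intro k hk; subst_eqs; simp [comps]
  | succ m ih =>
    intro k hk
    rw [comps, List.mem_flatMap]
    refine ⟨g k, cand_mem g hg0 hinj hH hV k (by omega), ?_⟩
    have : (List.range k).map g ++ [g k] = (List.range (k+1)).map g := by
      rw [List.range_succ]; simp
    rw [this]
    exact ih (k+1) (by omega)

include hg0 hinj hH hV in
lemma no_grid : False := by
  have h := comps_complete g hg0 hinj hH hV 25 0 rfl
  simp only [List.range_zero, List.map_nil] at h
  rw [comps_empty] at h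
  simp at h
end

lemma no_gridH (H : ℕ → ℕ → ℤ)
    (h00 : H 0 0 = 0)
    (hinj : ∀ i j i' j', i < 5 → j < 5 → i' < 5 → j' < 5 → H i j = H i' j' → i = i' ∧ j = j')
    (hhor : ∀ i j, i < 5 → j < 4 → H i (j+1) - H i j ∈ Dlist)
    (hver : ∀ i j, i < 4 → j < 5 → H (i+1) j - H i j ∈ Dlist) : False := by
  apply no_grid (fun k => H (k/5) (k%5))
  · simpa using h00
  · intro s t hs ht h
    have := hinj (s/5) (s%5) (t/5) (t%5) (by omega) (by omega) (by omega) (by omega) h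
    omega
  · intro k h1 h2 h3
    have e1 : (k-1)/5 = k/5 := by omega
    have e2 : (k-1) % 5 + 1 = k % 5 := by omega
    simp only [e1, ← e2]
    exact hhor _ _ (by omega) (by omega)
  · intro k h1 h2
    have e1 : (k-5)/5 + 1 = k/5 := by omega
    have e2 : (k-5) % 5 = k % 5 := by omega
    simp only [← e1, ← e2]
    exact hver _ _ (by omega) (by omega)

/-! ### helpers -/

lemma int_dvd_small {c z : ℤ} (h : c ∣ z) (h2 : |z| < c) : z = 0 := by
  by_contra hz
  have h3 : c ∣ |z| := (dvd_abs c z).mpr h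
  have := Int.le_of_dvd (abs_pos.mpr hz) h3
  omega

lemma absD {e : ℤ} (h : e = 1 ∨ e = -1 ∨ e = 3 ∨ e = -3) : -3 ≤ e ∧ e ≤ 3 := by
  rcases h with rfl|rfl|rfl|rfl <;> norm_num

/-! ### ZMod lemmas -/

section ZModLemmas
set_option linter.unusedSectionVars false
set_option linter.unusedVariables false
variable {n : ℕ} [NeZero n]

lemma half_mul_two (hodd : n % 2 = 1) : (((n+1)/2 : ℕ) : ZMod n) * 2 = 1 := by
  have h2 : (n+1)/2*2 = n+1 := by omega
  have : (((n+1)/2 : ℕ) : ZMod n) * 2 = (((n+1)/2 * 2 : ℕ) : ZMod n) := by push_cast; ring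
  rw [this, h2]
  push_cast [ZMod.natCast_self]
  ring

lemma two_mul_cancel (hodd : n % 2 = 1) {u v : ZMod n} (h : 2*u = 2*v) : u = v := by
  have hk := half_mul_two (n := n) hodd
  have h1 : ((((n+1)/2 : ℕ) : ZMod n) * 2) * u = ((((n+1)/2 : ℕ) : ZMod n) * 2) * v := by
    rw [mul_assoc, mul_assoc, h]
  rwa [hk, one_mul, one_mul] at h1

lemma val_two_mul_eq (hn : 25 ≤ n) (hodd : n % 2 = 1) {w : ZMod n} {d : ℕ}
    (hd : d % 2 = 1) (hdn : d < n) (h2 : 2*w = (d : ZMod n)) : w.val = (n+d)/2 := by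
  have key : w = (((n+d)/2 : ℕ) : ZMod n) := by
    apply two_mul_cancel hodd
    rw [h2]
    have e : (2 : ZMod n) * ↑((n+d)/2) = (((n+d)/2 * 2 : ℕ) : ZMod n) := by push_cast; ring
    have e2 : (n+d)/2*2 = n + d := by omega
    rw [e, e2]
    push_cast [ZMod.natCast_self]
    ring
  rw [key, ZMod.val_cast_of_lt (by omega)]

lemma adist_eq_of_two_mul (hn : 25 ≤ n) (hodd : n % 2 = 1) {w : ZMod n} {d : ℕ}
    (hd : d % 2 = 1) (hdn : d < n) (h2 : 2*w = (d : ZMod n)) :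
    min w.val (-w).val = (n-d)/2 := by
  have hv := val_two_mul_eq hn hodd hd hdn h2
  have hw0 : w ≠ 0 := by
    intro h
    rw [h, ZMod.val_zero] at hv
    omega
  rw [ZMod.neg_val, if_neg hw0, hv]
  omega

lemma adist_ge_cases (hn : 25 ≤ n) (hodd : n % 2 = 1) {w : ZMod n}
    (h : (n-3)/2 ≤ min w.val (-w).val) :
    ∃ e : ℤ, (e = 1 ∨ e = -1 ∨ e = 3 ∨ e = -3) ∧ (2 : ZMod n)*w = (e : ZMod n) := by
  have hw0 : w ≠ 0 := by
    rintro rfl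
    simp only [neg_zero, ZMod.val_zero, min_self] at h
    omega
  have hlt : w.val < n := ZMod.val_lt w
  rw [ZMod.neg_val, if_neg hw0] at h
  refine ⟨2*(w.val : ℤ) - n, by omega, ?_⟩
  have hw : ((w.val : ℕ) : ZMod n) = w := ZMod.natCast_rightInverse w
  have e : (((2*(w.val : ℤ) - n) : ℤ) : ZMod n) = 2 * ((w.val : ℕ) : ZMod n) := by
    push_cast [ZMod.natCast_self]
    ring
  rw [e, hw]
end ZModLemmas

/-! ### The upper bound -/

open Fin.NatCast in
lemma upper_aux {n : ℕ} (hn : 25 ≤ n) (hodd : n % 2 = 1) (a b : ℕ)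
    (ha5 : 5 ≤ a) (hb5 : 5 ≤ b)
    (L : Fin n → Fin n → ZMod n) (hL : IsSudoku n a b L) :
    innerDist n L ≤ (n-5)/2 := by
  haveI : NeZero n := ⟨by omega⟩
  by_contra hcon
  push_neg at hcon
  have hadj : ∀ p q : Fin n × Fin n, Adjacent p q →
      (n-3)/2 ≤ adist n (L p.1 p.2) (L q.1 q.2) := by
    intro p q h
    have hm : adist n (L p.1 p.2) (L q.1 q.2) ∈
        {d | ∃ p q : Fin n × Fin n, Adjacent p q ∧ d = adist n (L p.1 p.2) (L q.1 q.2)} :=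
      ⟨p, q, h, rfl⟩
    have h2 := Nat.sInf_le hm
    rw [innerDist] at hcon
    omega
  have adjH : ∀ (i j : ℕ), i < 5 → j < 4 →
      Adjacent ((i : Fin n), ((j+1 : ℕ) : Fin n)) ((i : Fin n), (j : Fin n)) := by
    intro i j hi hj
    left
    refine ⟨rfl, Or.inr ?_⟩
    rw [Fin.val_cast_of_lt (show j < n by omega), Fin.val_cast_of_lt (show j+1 < n by omega)]
  have adjV : ∀ (i j : ℕ), i < 4 → j < 5 →
      Adjacent (((i+1 : ℕ) : Fin n), (j : Fin n)) ((i : Fin n), (j : Fin n)) := by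
    intro i j hi hj
    right
    refine ⟨rfl, Or.inr ?_⟩
    rw [Fin.val_cast_of_lt (show i < n by omega), Fin.val_cast_of_lt (show i+1 < n by omega)]
  have hstepH : ∀ i j : ℕ, ∃ e : ℤ, (e = 1 ∨ e = -1 ∨ e = 3 ∨ e = -3) ∧
      (i < 5 → j < 4 → 2 * L ↑i ↑(j+1) - 2 * L ↑i ↑j = (e : ZMod n)) := by
    intro i j
    by_cases hij : i < 5 ∧ j < 4
    · obtain ⟨hi, hj⟩ := hij
      have h := hadj _ _ (adjH i j hi hj)
      rw [adist] at h
      have h' : (n-3)/2 ≤ min (L ↑i ↑(j+1) - L ↑i ↑j).val (-(L ↑i ↑(j+1) - L ↑i ↑j)).val := by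
        simpa [neg_sub] using h
      obtain ⟨e, he, h2⟩ := adist_ge_cases hn hodd h'
      exact ⟨e, he, fun _ _ => by rw [← h2]; ring⟩
    · exact ⟨1, Or.inl rfl, fun h1 h2 => absurd ⟨h1, h2⟩ hij⟩
  have hstepV : ∀ i j : ℕ, ∃ e : ℤ, (e = 1 ∨ e = -1 ∨ e = 3 ∨ e = -3) ∧
      (i < 4 → j < 5 → 2 * L ↑(i+1) ↑j - 2 * L ↑i ↑j = (e : ZMod n)) := by
    intro i j
    by_cases hij : i < 4 ∧ j < 5
    · obtain ⟨hi, hj⟩ := hij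
      have h := hadj _ _ (adjV i j hi hj)
      rw [adist] at h
      have h' : (n-3)/2 ≤ min (L ↑(i+1) ↑j - L ↑i ↑j).val (-(L ↑(i+1) ↑j - L ↑i ↑j)).val := by
        simpa [neg_sub] using h
      obtain ⟨e, he, h2⟩ := adist_ge_cases hn hodd h'
      exact ⟨e, he, fun _ _ => by rw [← h2]; ring⟩
    · exact ⟨1, Or.inl rfl, fun h1 h2 => absurd ⟨h1, h2⟩ hij⟩
  choose eH heHD heHx using hstepH
  choose eV heVD heVx using hstepV
  set H : ℕ → ℕ → ℤ :=
    fun i j => (∑ t ∈ Finset.range j, eH 0 t) + ∑ s ∈ Finset.range i, eV s j with hHdef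
  have hx0 : ∀ j : ℕ, j < 5 → 2 * L ↑(0:ℕ) ↑j = 2 * L ↑(0:ℕ) ↑(0:ℕ) + ((H 0 j : ℤ) : ZMod n) := by
    intro j
    induction j with
    | zero => intro _; simp [hHdef]
    | succ j ih =>
      intro hj
      have hstep := heHx 0 j (by norm_num) (by omega)
      have hprev := ih (by omega)
      have hH : H 0 (j+1) = H 0 j + eH 0 j := by simp only [hHdef, Finset.sum_range_succ]; simp
      calc 2 * L ↑(0:ℕ) ↑(j+1) = 2 * L ↑(0:ℕ) ↑j + ((eH 0 j : ℤ) : ZMod n) := by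
            rw [← hstep]; ring
        _ = 2 * L ↑(0:ℕ) ↑(0:ℕ) + ((H 0 (j+1) : ℤ) : ZMod n) := by
            rw [hprev, hH]; push_cast; ring
  have hxH : ∀ i j : ℕ, i < 5 → j < 5 →
      2 * L ↑i ↑j = 2 * L ↑(0:ℕ) ↑(0:ℕ) + ((H i j : ℤ) : ZMod n) := by
    intro i
    induction i with
    | zero => exact fun j _ hj => hx0 j hj
    | succ i ih =>
      intro j hi hj
      have hstep := heVx i j (by omega) hj
      have hprev := ih j (by omega) hj
      have hH : H (i+1) j = H i j + eV i j := by simp only [hHdef, Finset.sum_range_succ]; ring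
      calc 2 * L ↑(i+1) ↑j = 2 * L ↑i ↑j + ((eV i j : ℤ) : ZMod n) := by
            rw [← hstep]; ring
        _ = 2 * L ↑(0:ℕ) ↑(0:ℕ) + ((H (i+1) j : ℤ) : ZMod n) := by
            rw [hprev, hH]; push_cast; ring
  have hVdiff : ∀ i j, H (i+1) j - H i j = eV i j := by
    intro i j
    simp [hHdef, Finset.sum_range_succ]
  have hHdiff : ∀ i j, i < 5 → j < 4 → H i (j+1) - H i j = eH i j := by
    intro i
    induction i with
    | zero =>
      intro j hi hj
      simp [hHdef, Finset.sum_range_succ]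
    | succ i ih =>
      intro j hi hj
      have ihe := ih j (by omega) hj
      have e1 := hVdiff i (j+1)
      have e2 := hVdiff i j
      have hd : H (i+1) (j+1) - H (i+1) j = eH i j + eV i (j+1) - eV i j := by omega
      have c1 : ((H (i+1) (j+1) - H (i+1) j : ℤ) : ZMod n) = ((eH (i+1) j : ℤ) : ZMod n) := by
        have a1 := hxH (i+1) (j+1) (by omega) (by omega)
        have a2 := hxH (i+1) j (by omega) (by omega)
        have a3 := heHx (i+1) j (by omega) (by omega)
        push_cast
        linear_combination a3 - a1 + a2
      have hdvd : (n:ℤ) ∣ ((H (i+1) (j+1) - H (i+1) j) - eH (i+1) j) := by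
        rw [← ZMod.intCast_zmod_eq_zero_iff_dvd]
        push_cast
        push_cast at c1
        linear_combination c1
      have b1 := absD (heHD i j)
      have b2 := absD (heVD i (j+1))
      have b3 := absD (heVD i j)
      have b4 := absD (heHD (i+1) j)
      have hnn : (25:ℤ) ≤ (n:ℤ) := by exact_mod_cast hn
      have hz := int_dvd_small hdvd (by rw [abs_lt]; constructor <;> omega)
      omega
  have hinj : ∀ i j i' j', i < 5 → j < 5 → i' < 5 → j' < 5 →
      H i j = H i' j' → i = i' ∧ j = j' := by
    intro i j i' j' hi hj hi' hj' h
    have hx : 2 * L ↑i ↑j = 2 * L ↑i' ↑j' := by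
      rw [hxH i j hi hj, hxH i' j' hi' hj', h]
    have hLe : L ↑i ↑j = L ↑i' ↑j' := two_mul_cancel hodd hx
    have hdiva : ((i:ℕ) : Fin n).val / a = ((i':ℕ) : Fin n).val / a := by
      rw [Fin.val_cast_of_lt (show i < n by omega), Fin.val_cast_of_lt (show i' < n by omega),
        Nat.div_eq_of_lt (by omega), Nat.div_eq_of_lt (by omega)]
    have hdivb : ((j:ℕ) : Fin n).val / b = ((j':ℕ) : Fin n).val / b := by
      rw [Fin.val_cast_of_lt (show j < n by omega), Fin.val_cast_of_lt (show j' < n by omega),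
        Nat.div_eq_of_lt (by omega), Nat.div_eq_of_lt (by omega)]
    obtain ⟨e1, e2⟩ := hL.2 ↑i ↑j ↑i' ↑j' hdiva hdivb hLe
    constructor
    · have := congrArg Fin.val e1
      rwa [Fin.val_cast_of_lt (show i < n by omega), Fin.val_cast_of_lt (show i' < n by omega)] at this
    · have := congrArg Fin.val e2
      rwa [Fin.val_cast_of_lt (show j < n by omega), Fin.val_cast_of_lt (show j' < n by omega)] at this
  refine no_gridH H (by simp [hHdef]) hinj ?_ ?_
  · intro i j hi hj
    rw [hHdiff i j hi hj]
    have := heHD i j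
    simp only [Dlist, List.mem_cons]
    tauto
  · intro i j hi hj
    rw [hVdiff i j]
    have := heVD i j
    simp only [Dlist, List.mem_cons]
    tauto

/-! ### More ZMod lemmas for the construction -/

section ZModPair
variable {n : ℕ} [NeZero n]

lemma adist_pair_lt (hn : 25 ≤ n) (hodd : n % 2 = 1) {u v : ZMod n} {d : ℕ}
    (hd : d % 2 = 1) (hdn : d < n) (h : 2*(v - u) = (d : ZMod n)) :
    adist n u v = (n-d)/2 := by
  rw [adist, show u - v = -(v - u) by ring, min_comm]
  exact adist_eq_of_two_mul hn hodd hd hdn h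

lemma adist_pair_gt (hn : 25 ≤ n) (hodd : n % 2 = 1) {u v : ZMod n} {d : ℕ}
    (hd : d % 2 = 1) (hdn : d < n) (h : 2*(u - v) = (d : ZMod n)) :
    adist n u v = (n-d)/2 := by
  rw [adist, show v - u = -(u - v) by ring]
  exact adist_eq_of_two_mul hn hodd hd hdn h
end ZModPair

/-! ### The construction -/

def Mfun (b : ℕ) : Fin (5*b) → Fin (5*b) → ZMod (5*b) := fun i j =>
  ((i.val + 5*(j.val % b) + (5*b-4)*(j.val / b) : ℕ) : ZMod (5*b))

def Lfun (b : ℕ) : Fin (5*b) → Fin (5*b) → ZMod (5*b) := fun i j =>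
  (((5*b+1)/2 : ℕ) : ZMod (5*b)) * Mfun b i j

section Constr
variable {b : ℕ}

lemma keyA (hb5 : 5 ≤ b) {z w : ℤ} (hz1 : -4 ≤ z) (hz2 : z ≤ 4)
    (hw1 : -(b:ℤ) < w) (hw2 : w < b) (h : (5*(b:ℤ)) ∣ (z + 5*w)) : z = 0 ∧ w = 0 := by
  have h5 : (5:ℤ) ∣ z + 5*w := dvd_trans ⟨b, rfl⟩ h
  have hz0 : z = 0 := by omega
  subst hz0
  obtain ⟨c, hc⟩ := h
  have h5w : (5:ℤ)*w = 5*((b:ℤ)*c) := by linear_combination hc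
  have hw' : w = (b:ℤ)*c := mul_left_cancel₀ (by norm_num) h5w
  have hw0 : w = 0 := int_dvd_small ⟨c, hw'⟩ (abs_lt.mpr ⟨by omega, by omega⟩)
  exact ⟨rfl, hw0⟩

lemma keyB (hb5 : 5 ≤ b) {z w : ℤ} (hz1 : -4 ≤ z) (hz2 : z ≤ 4)
    (hw1 : -(b:ℤ) < w) (hw2 : w < b) (h : (5*(b:ℤ)) ∣ (5*w - 4*z)) : z = 0 ∧ w = 0 := by
  have h5 : (5:ℤ) ∣ 5*w - 4*z := dvd_trans ⟨b, rfl⟩ h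
  have hz0 : z = 0 := by omega
  subst hz0
  obtain ⟨c, hc⟩ := h
  have h5w : (5:ℤ)*w = 5*((b:ℤ)*c) := by linear_combination hc
  have hw' : w = (b:ℤ)*c := mul_left_cancel₀ (by norm_num) h5w
  have hw0 : w = 0 := int_dvd_small ⟨c, hw'⟩ (abs_lt.mpr ⟨by omega, by omega⟩)
  exact ⟨rfl, hw0⟩

lemma M_eq_dvd (hb5 : 5 ≤ b) {i i' j j' : Fin (5*b)} (h : Mfun b i j = Mfun b i' j') :
    (5*(b:ℤ)) ∣ (((i'.val:ℤ) - i.val) + 5*(((j'.val % b : ℕ):ℤ) - ((j.val % b : ℕ):ℤ))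
      + (5*(b:ℤ)-4)*(((j'.val / b : ℕ):ℤ) - ((j.val / b : ℕ):ℤ))) := by
  simp only [Mfun] at h
  rw [ZMod.natCast_eq_natCast_iff] at h
  obtain ⟨c, hc⟩ := h.dvd
  have h4b : (4:ℕ) ≤ 5*b := by omega
  refine ⟨c, ?_⟩
  push_cast [Nat.cast_sub h4b] at hc ⊢
  linear_combination hc

lemma Mrow_inj (hb5 : 5 ≤ b) (i : Fin (5*b)) : Function.Injective (fun j => Mfun b i j) := by
  intro j j' h
  have hd := M_eq_dvd hb5 (h : Mfun b i j = Mfun b i j')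
  obtain ⟨c, hc⟩ := hd
  have hd2 : (5*(b:ℤ)) ∣ (5*(((j'.val % b : ℕ):ℤ) - ((j.val % b : ℕ):ℤ))
      - 4*(((j'.val / b : ℕ):ℤ) - ((j.val / b : ℕ):ℤ))) := by
    refine ⟨c - (((j'.val / b : ℕ):ℤ) - ((j.val / b : ℕ):ℤ)), ?_⟩
    linear_combination hc
  have hub : j.val % b < b := Nat.mod_lt _ (by omega)
  have hub' : j'.val % b < b := Nat.mod_lt _ (by omega)
  have htb : j.val / b < 5 := (Nat.div_lt_iff_lt_mul (by omega)).mpr j.isLt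
  have htb' : j'.val / b < 5 := (Nat.div_lt_iff_lt_mul (by omega)).mpr j'.isLt
  have hp1 : (0:ℤ) ≤ ((j.val / b : ℕ):ℤ) := by positivity
  have hp2 : (0:ℤ) ≤ ((j'.val / b : ℕ):ℤ) := by positivity
  have hp3 : (0:ℤ) ≤ ((j.val % b : ℕ):ℤ) := by positivity
  have hp4 : (0:ℤ) ≤ ((j'.val % b : ℕ):ℤ) := by positivity
  obtain ⟨hz, hw⟩ := keyB hb5 (z := ((j'.val / b : ℕ):ℤ) - ((j.val / b : ℕ):ℤ))
    (w := ((j'.val % b : ℕ):ℤ) - ((j.val % b : ℕ):ℤ))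
    (by omega) (by omega) (by omega) (by omega) hd2
  have htt : j.val / b = j'.val / b := by omega
  have huu : j.val % b = j'.val % b := by omega
  have e1 := Nat.div_add_mod j.val b
  have e2 := Nat.div_add_mod j'.val b
  rw [htt, huu] at e1
  exact Fin.ext (e1.symm.trans e2)

lemma Mcol_inj (hb5 : 5 ≤ b) (j : Fin (5*b)) : Function.Injective (fun i => Mfun b i j) := by
  intro i i' h
  have hd := M_eq_dvd hb5 (h : Mfun b i j = Mfun b i' j)
  have hd2 : (5*(b:ℤ)) ∣ ((i'.val:ℤ) - i.val) := by
    obtain ⟨c, hc⟩ := hd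
    exact ⟨c, by linear_combination hc⟩
  have h1 := i.isLt
  have h2 := i'.isLt
  have := int_dvd_small hd2 (abs_lt.mpr ⟨by push_cast; omega, by push_cast; omega⟩)
  apply Fin.ext
  omega

lemma cancelk (hb : b % 2 = 1) (hb5 : 5 ≤ b) {x y : ZMod (5*b)}
    (h : (((5*b+1)/2 : ℕ) : ZMod (5*b)) * x = (((5*b+1)/2 : ℕ) : ZMod (5*b)) * y) : x = y := by
  haveI : NeZero (5*b) := ⟨by omega⟩
  have hk : (((5*b+1)/2 : ℕ) : ZMod (5*b)) * 2 = 1 := half_mul_two (by omega)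
  have h2 : ((((5*b+1)/2 : ℕ) : ZMod (5*b)) * 2) * x = ((((5*b+1)/2 : ℕ) : ZMod (5*b)) * 2) * y := by
    rw [mul_comm _ (2 : ZMod (5*b)), mul_assoc, mul_assoc, h]
  rwa [hk, one_mul, one_mul] at h2

lemma Lfun_sudoku (hb : b % 2 = 1) (hb5 : 5 ≤ b) : IsSudoku (5*b) 5 b (Lfun b) := by
  haveI : NeZero (5*b) := ⟨by omega⟩
  refine ⟨⟨?_, ?_⟩, ?_⟩
  · intro i
    rw [Fintype.bijective_iff_injective_and_card]
    refine ⟨fun j j' h => Mrow_inj hb5 i (cancelk hb hb5 h), by simp [ZMod.card]⟩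
  · intro j
    rw [Fintype.bijective_iff_injective_and_card]
    refine ⟨fun i i' h => Mcol_inj hb5 j (cancelk hb hb5 h), by simp [ZMod.card]⟩
  · intro i₁ j₁ i₂ j₂ hdi hdj hLe
    have hM : Mfun b i₁ j₁ = Mfun b i₂ j₂ := cancelk hb hb5 hLe
    obtain ⟨c, hc⟩ := M_eq_dvd hb5 hM
    have htj : ((j₁.val / b : ℕ):ℤ) = ((j₂.val / b : ℕ):ℤ) := by exact_mod_cast hdj
    have hd2 : (5*(b:ℤ)) ∣ (((i₂.val:ℤ) - i₁.val) + 5*(((j₂.val % b : ℕ):ℤ) - ((j₁.val % b : ℕ):ℤ))) := by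
      refine ⟨c, ?_⟩
      rw [← htj] at hc
      linear_combination hc
    have hub : j₁.val % b < b := Nat.mod_lt _ (by omega)
    have hub' : j₂.val % b < b := Nat.mod_lt _ (by omega)
    have h1 := i₁.isLt
    have h2 := i₂.isLt
    have hdi' : i₁.val / 5 = i₂.val / 5 := hdi
    have hp3 : (0:ℤ) ≤ ((j₁.val % b : ℕ):ℤ) := by positivity
    have hp4 : (0:ℤ) ≤ ((j₂.val % b : ℕ):ℤ) := by positivity
    obtain ⟨hz, hw⟩ := keyA hb5 (z := ((i₂.val:ℕ):ℤ) - i₁.val) (w := ((j₂.val % b : ℕ):ℤ) - ((j₁.val % b : ℕ):ℤ))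
      (by omega) (by omega) (by omega) (by omega) hd2
    have huu : j₁.val % b = j₂.val % b := by omega
    have e1 := Nat.div_add_mod j₁.val b
    have e2 := Nat.div_add_mod j₂.val b
    rw [hdj, huu] at e1
    exact ⟨Fin.ext (by omega), Fin.ext (e1.symm.trans e2)⟩

lemma Mval_diffH (hb5 : 5 ≤ b) (i : Fin (5*b)) (j j' : Fin (5*b)) (hjj : j.val + 1 = j'.val) :
    ∃ d : ℕ, (d = 1 ∨ d = 5) ∧ Mfun b i j' = Mfun b i j + ((d : ℕ) : ZMod (5*b)) ∧
      (j.val = 0 → d = 5) := by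
  have hb0 : 0 < b := by omega
  have hj : b * (j.val / b) + j.val % b = j.val := Nat.div_add_mod j.val b
  have hub : j.val % b < b := Nat.mod_lt _ hb0
  have h4b : ((4:ℕ):ℤ) ≤ ((5*b : ℕ):ℤ) := by push_cast; omega
  by_cases hcase : j.val % b + 1 < b
  · have hjv : j'.val = b * (j.val / b) + (j.val % b + 1) := by omega
    have h1 : j'.val / b = j.val / b := by
      rw [hjv, Nat.mul_add_div hb0, Nat.div_eq_of_lt hcase, Nat.add_zero]
    have h2 : j'.val % b = j.val % b + 1 := by
      rw [hjv, Nat.mul_add_mod, Nat.mod_eq_of_lt hcase]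
    refine ⟨5, Or.inr rfl, ?_, fun _ => rfl⟩
    simp only [Mfun]
    rw [h1, h2]
    push_cast [Nat.cast_sub (show (4:ℕ) ≤ 5*b by omega)]
    ring
  · have hu1 : j.val % b + 1 = b := by omega
    have hub' : j.val % b = b - 1 := by omega
    have hjv : j'.val = b * (j.val / b + 1) := by
      have e : b * (j.val / b + 1) = b * (j.val / b) + b := by ring
      omega
    have h1 : j'.val / b = j.val / b + 1 := by rw [hjv]; exact Nat.mul_div_cancel_left _ hb0
    have h2 : j'.val % b = 0 := by rw [hjv]; exact Nat.mul_mod_right _ _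
    refine ⟨1, Or.inl rfl, ?_, fun h0 => by omega⟩
    simp only [Mfun]
    rw [h1, h2, hub']
    push_cast [Nat.cast_sub (show (4:ℕ) ≤ 5*b by omega), Nat.cast_sub (show (1:ℕ) ≤ b by omega)]
    ring

lemma Mval_diffV (i i' j : Fin (5*b)) (hii : i.val + 1 = i'.val) :
    Mfun b i' j = Mfun b i j + ((1 : ℕ) : ZMod (5*b)) := by
  simp only [Mfun]
  rw [← hii]
  push_cast
  ring

lemma hML (hb : b % 2 = 1) (hb5 : 5 ≤ b) {P Q : Fin (5*b) × Fin (5*b)} {d : ℕ}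
    (h : Mfun b Q.1 Q.2 = Mfun b P.1 P.2 + ((d:ℕ) : ZMod (5*b))) :
    2 * (Lfun b Q.1 Q.2 - Lfun b P.1 P.2) = ((d:ℕ) : ZMod (5*b)) := by
  haveI : NeZero (5*b) := ⟨by omega⟩
  have hk : (((5*b+1)/2 : ℕ) : ZMod (5*b)) * 2 = 1 := half_mul_two (by omega)
  simp only [Lfun]
  rw [h]
  calc 2 * ((((5*b+1)/2 : ℕ) : ZMod (5*b)) * (Mfun b P.1 P.2 + ((d:ℕ) : ZMod (5*b)))
        - (((5*b+1)/2 : ℕ) : ZMod (5*b)) * Mfun b P.1 P.2)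
      = ((((5*b+1)/2 : ℕ) : ZMod (5*b)) * 2) * ((d:ℕ) : ZMod (5*b)) := by ring
    _ = ((d:ℕ) : ZMod (5*b)) := by rw [hk, one_mul]

lemma Lfun_inner (hb : b % 2 = 1) (hb5 : 5 ≤ b) :
    innerDist (5*b) (Lfun b) = (5*b-5)/2 := by
  haveI : NeZero (5*b) := ⟨by omega⟩
  have hn : 25 ≤ 5*b := by omega
  have hodd : (5*b) % 2 = 1 := by omega
  have hmem : (5*b-5)/2 ∈ {d | ∃ p q : Fin (5*b) × Fin (5*b), Adjacent p q ∧
      d = adist (5*b) (Lfun b p.1 p.2) (Lfun b q.1 q.2)} := by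
    refine ⟨(⟨0, by omega⟩, ⟨0, by omega⟩), (⟨0, by omega⟩, ⟨1, by omega⟩),
      Or.inl ⟨rfl, Or.inl rfl⟩, ?_⟩
    obtain ⟨d, hd15, hMe, h0⟩ := Mval_diffH hb5 (⟨0, by omega⟩ : Fin (5*b))
      ⟨0, by omega⟩ ⟨1, by omega⟩ rfl
    have hd5 : d = 5 := h0 rfl
    subst hd5
    symm
    exact adist_pair_lt hn hodd (by norm_num) (by omega) (hML hb hb5 hMe)
  have hlb : ∀ d' ∈ {d | ∃ p q : Fin (5*b) × Fin (5*b), Adjacent p q ∧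
      d = adist (5*b) (Lfun b p.1 p.2) (Lfun b q.1 q.2)}, (5*b-5)/2 ≤ d' := by
    rintro d' ⟨⟨p1, p2⟩, ⟨q1, q2⟩, hadj, rfl⟩
    rcases hadj with ⟨h1, h2 | h2⟩ | ⟨h1, h2 | h2⟩ <;> simp only at h1 h2 ⊢ <;> subst h1
    · obtain ⟨d, hd15, hMe, -⟩ := Mval_diffH hb5 p1 p2 q2 h2
      have := adist_pair_lt hn hodd (u := Lfun b p1 p2) (v := Lfun b p1 q2)
        (by rcases hd15 with rfl | rfl <;> norm_num) (by omega)
        (hML hb hb5 (P := (p1, p2)) (Q := (p1, q2)) hMe)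
      rw [this]
      omega
    · obtain ⟨d, hd15, hMe, -⟩ := Mval_diffH hb5 p1 q2 p2 h2
      have := adist_pair_gt hn hodd (u := Lfun b p1 p2) (v := Lfun b p1 q2)
        (by rcases hd15 with rfl | rfl <;> norm_num) (by omega)
        (hML hb hb5 (P := (p1, q2)) (Q := (p1, p2)) hMe)
      rw [this]
      omega
    · have hMe := Mval_diffV p1 q1 p2 h2
      have := adist_pair_lt hn hodd (u := Lfun b p1 p2) (v := Lfun b q1 p2)
        (by norm_num) (by omega)
        (hML hb hb5 (P := (p1, p2)) (Q := (q1, p2)) hMe)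
      rw [this]
      omega
    · have hMe := Mval_diffV q1 p1 p2 h2
      have := adist_pair_gt hn hodd (u := Lfun b p1 p2) (v := Lfun b q1 p2)
        (by norm_num) (by omega)
        (hML hb hb5 (P := (q1, p2)) (Q := (p1, p2)) hMe)
      rw [this]
      omega
  rw [innerDist]
  exact le_antisymm (Nat.sInf_le hmem) (le_csInf ⟨_, hmem⟩ hlb)
end Constr

theorem sudoku_odd_five_bound (a b : ℕ) (ha : Odd a) (hb : Odd b)
    (ha5 : 5 ≤ a) (hab : a ≤ b) :
    (∀ L : Fin (a * b) → Fin (a * b) → ZMod (a * b), IsSudoku (a * b) a b L →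
      innerDist (a * b) L ≤ (a * b - 5) / 2) ∧
    (a = 5 →
      IsGreatest {d : ℕ | ∃ L : Fin (5 * b) → Fin (5 * b) → ZMod (5 * b),
        IsSudoku (5 * b) 5 b L ∧ innerDist (5 * b) L = d} ((5 * b - 5) / 2)) := by
  have hodd : (a*b) % 2 = 1 := Nat.odd_iff.mp (ha.mul hb)
  have hb5 : 5 ≤ b := le_trans ha5 hab
  have hn : 25 ≤ a*b := le_trans (by norm_num) (Nat.mul_le_mul ha5 hb5)
  constructor
  · intro L hL
    exact upper_aux hn hodd a b ha5 hb5 L hL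
  · intro h5
    subst h5
    constructor
    · exact ⟨Lfun b, Lfun_sudoku (Nat.odd_iff.mp hb) hb5, Lfun_inner (Nat.odd_iff.mp hb) hb5⟩
    · intro d hd
      obtain ⟨L, hL, rfl⟩ := hd
      exact upper_aux hn hodd 5 b (by norm_num) hb5 L hL
end
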